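/- arXiv:1406.4466 — 6 statements merged into one kernel-verified Lean document; each statement's English description precedes it below -/
import Mathlib

section
/- Let v_1,...,v_m ∈ ℝ^n and let a_1 ≤ b_1, ..., a_m ≤ b_m be real numbers. A vector w ∈ ℝ^n can be written as w = Σ_{i=1}^m x_i v_i for some real numbers x_i with a_i ≤ x_i ≤ b_i for each i, if and only if for every vector u ∈ ℝ^n one has (u,w) ≤ Σ_{i=1}^m a_i·((u,v_i) − |(u,v_i)|)/2 + Σ_{i=1}^m b_i·((u,v_i) + |(u,v_i)|)/2. -/
noncomputable section

/-- The standard inner product on `ℝ^n`. -/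
def dotR {n : ℕ} (u v : Fin n → ℝ) : ℝ := ∑ i, u i * v i

lemma dotR_sum {n m : ℕ} (u : Fin n → ℝ) (x : Fin m → ℝ) (v : Fin m → Fin n → ℝ) :
    dotR u (∑ i, x i • v i) = ∑ i, x i * dotR u (v i) := by
  unfold dotR
  simp only [Finset.sum_apply, Pi.smul_apply, smul_eq_mul, Finset.mul_sum]
  rw [Finset.sum_comm]
  refine Finset.sum_congr rfl fun i _ => Finset.sum_congr rfl fun j _ => by ring

/-- **Farkas' lemma over ℝ** (Lemma 2.1). -/
theorem farkas_real {n m : ℕ} (v : Fin m → Fin n → ℝ) (a b : Fin m → ℝ)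
    (hab : ∀ i, a i ≤ b i) (w : Fin n → ℝ) :
    (∃ x : Fin m → ℝ, (∀ i, a i ≤ x i ∧ x i ≤ b i) ∧ w = ∑ i, x i • v i) ↔
      ∀ u : Fin n → ℝ,
        dotR u w ≤ ∑ i, a i * ((dotR u (v i) - |dotR u (v i)|) / 2) +
          ∑ i, b i * ((dotR u (v i) + |dotR u (v i)|) / 2) := by
  constructor
  · rintro ⟨x, hx, rfl⟩ u
    rw [dotR_sum, ← Finset.sum_add_distrib]
    refine Finset.sum_le_sum fun i _ => ?_
    rcases abs_cases (dotR u (v i)) with ⟨h1, h2⟩ | ⟨h1, h2⟩ <;>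
      nlinarith [(hx i).1, (hx i).2, hab i]
  · intro hu
    -- the linear map
    set L : (Fin m → ℝ) →ₗ[ℝ] (Fin n → ℝ) :=
      { toFun := fun x => ∑ i, x i • v i
        map_add' := fun x y => by
          simp [add_smul, Finset.sum_add_distrib]
        map_smul' := fun c x => by
          simp [smul_smul, Finset.smul_sum] } with hL
    set S : Set (Fin n → ℝ) := L '' Set.Icc a b with hS
    by_contra hcon
    have hwS : w ∉ S := by
      intro ⟨x, hx, hxe⟩
      exact hcon ⟨x, fun i => ⟨hx.1 i, hx.2 i⟩, hxe.symm⟩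
    have hconv : Convex ℝ S := (convex_Icc a b).linear_image L
    have hcomp : IsCompact S :=
      isCompact_Icc.image (show Continuous fun x : Fin m → ℝ => ∑ i, x i • v i from
        continuous_finset_sum _ fun i _ => (continuous_apply i).smul continuous_const)
    obtain ⟨f, c, hfS, hfw⟩ :=
      geometric_hahn_banach_closed_point hconv hcomp.isClosed hwS
    set u : Fin n → ℝ := fun j => f (Pi.single j 1) with hud
    have hfu : ∀ y : Fin n → ℝ, f y = dotR u y := by
      intro y
      have hy : y = ∑ j, y j • (Pi.single j 1 : Fin n → ℝ) := by
        ext k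
        simp [Pi.single_apply, Finset.sum_ite_eq]
      calc f y = f (∑ j, y j • (Pi.single j 1 : Fin n → ℝ)) := by rw [← hy]
        _ = ∑ j, y j * f (Pi.single j 1) := by
              rw [map_sum]; simp
        _ = dotR u y := by unfold dotR; exact Finset.sum_congr rfl fun j _ => mul_comm _ _
    -- the maximizing point
    set x : Fin m → ℝ := fun i => if 0 ≤ dotR u (v i) then b i else a i with hx
    have hxmem : x ∈ Set.Icc a b := by
      constructor <;> intro i <;> simp only [hx] <;> split <;> simp [hab i, le_refl]
    have hyS : L x ∈ S := ⟨x, hxmem, rfl⟩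
    have hRHS : ∑ i, a i * ((dotR u (v i) - |dotR u (v i)|) / 2) +
        ∑ i, b i * ((dotR u (v i) + |dotR u (v i)|) / 2) = f (L x) := by
      rw [hfu, hL]
      show _ = dotR u (∑ i, x i • v i)
      rw [dotR_sum, ← Finset.sum_add_distrib]
      refine Finset.sum_congr rfl fun i _ => ?_
      simp only [hx]
      rcases le_or_gt 0 (dotR u (v i)) with h | h
      · rw [if_pos h, abs_of_nonneg h]; ring
      · rw [if_neg (not_le.mpr h), abs_of_neg h]; ring
    have h1 := hu u
    rw [hRHS, ← hfu] at h1
    exact absurd (h1.trans_lt (hfS _ hyS)) (not_lt.mpr hfw.le)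
end
end

section
/- Let v_1,...,v_m ∈ ℝ^n. Then: (a) the number of {v_1,...,v_m}-indecomposable points in ℝP_+^{n-1} is finite; and (b) every nonzero vector u ∈ Σ_{i=1}^m ℝ v_i can be written as u = u_1 + ⋯ + u_l where each u_j is a {v_1,...,v_m}-indecomposable vector and (u,v)(u_j,v) ≥ 0 for every j = 1,...,l and every v ∈ {v_1,...,v_m}. -/
noncomputable section

/-- `[u] = [u']` : positive equivalence of nonzero vectors (`u' = r • u` with `r > 0`). -/
def PosEq {n : ℕ} (u u' : Fin n → ℝ) : Prop := ∃ r : ℝ, 0 < r ∧ u' = r • u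

/-- `u` is `{v₁,…,vₘ}`-decomposable. -/
def Decomp {n m : ℕ} (v : Fin m → Fin n → ℝ) (u : Fin n → ℝ) : Prop :=
  ∃ u' u'' : Fin n → ℝ, u' ≠ 0 ∧ u'' ≠ 0 ∧
    u' ∈ Submodule.span ℝ (Set.range v) ∧ u'' ∈ Submodule.span ℝ (Set.range v) ∧
    u = u' + u'' ∧ ¬ PosEq u u' ∧ ¬ PosEq u u'' ∧
    ∀ i, 0 ≤ dotR u' (v i) * dotR u'' (v i)

/-- `u` is `{v₁,…,vₘ}`-indecomposable. -/
def Indecomp {n m : ℕ} (v : Fin m → Fin n → ℝ) (u : Fin n → ℝ) : Prop :=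
  u ≠ 0 ∧ u ∈ Submodule.span ℝ (Set.range v) ∧ ¬ Decomp v u

/-! Write `aᵢ = (u, vᵢ)`. If `d` lies in the span, vanishes wherever `u` does and is not a multiple
of `u`, then `bᵢ = (d, vᵢ) = rᵢ aᵢ` with ratios `rᵢ` that are not constant on the support of `u`
(a vector of the span is determined by its products with the `vᵢ`). With `r₋ < r₊` the extreme
ratios, `d - r₋ u` and `r₊ u - d` are conformal to `u`, each vanishes at some `vᵢ` where `u` does
not, and they add up to `(r₊ - r₋) u`. So an indecomposable `u` is determined up to scaling by
its support, which gives (a); and a decomposable `u` splits into two conformal vectors with smaller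
support, so (b) follows by induction on the size of the support, conformality being transitive. -/

open Finset

section

variable {n m : ℕ} (v : Fin m → Fin n → ℝ)

lemma dotR_eq_dotProduct (u w : Fin n → ℝ) : dotR u w = u ⬝ᵥ w := rfl

lemma dotR_zero_left (w : Fin n → ℝ) : dotR 0 w = 0 := zero_dotProduct w

lemma dotR_add_left (x y w : Fin n → ℝ) : dotR (x + y) w = dotR x w + dotR y w :=
  add_dotProduct x y w

lemma dotR_sub_left (x y w : Fin n → ℝ) : dotR (x - y) w = dotR x w - dotR y w :=
  sub_dotProduct x y w

lemma dotR_smul_left (r : ℝ) (x w : Fin n → ℝ) : dotR (r • x) w = r * dotR x w :=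
  smul_dotProduct r x w

lemma eq_zero_of_forall_dotR_eq_zero {u : Fin n → ℝ} (hu : u ∈ Submodule.span ℝ (Set.range v))
    (h : ∀ i, dotR u (v i) = 0) : u = 0 := by
  obtain ⟨c, hc⟩ := (Submodule.mem_span_range_iff_exists_fun ℝ).mp hu
  refine dotProduct_self_eq_zero.mp ?_
  nth_rewrite 2 [← hc]
  simp [dotProduct_sum, dotProduct_smul, ← dotR_eq_dotProduct, h]

def dotSupport (u : Fin n → ℝ) : Finset (Fin m) :=
  univ.filter fun i => dotR u (v i) ≠ 0

lemma mem_dotSupport {u : Fin n → ℝ} {i : Fin m} : i ∈ dotSupport v u ↔ dotR u (v i) ≠ 0 := by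
  simp [dotSupport]

lemma dotSupport_nonempty {u : Fin n → ℝ} (hu0 : u ≠ 0)
    (hu : u ∈ Submodule.span ℝ (Set.range v)) : (dotSupport v u).Nonempty := by
  by_contra! h
  refine hu0 (eq_zero_of_forall_dotR_eq_zero v hu fun i => ?_)
  simpa [mem_dotSupport] using (eq_empty_iff_forall_notMem.mp h i)

lemma dotSupport_smul {r : ℝ} (hr : r ≠ 0) (u : Fin n → ℝ) :
    dotSupport v (r • u) = dotSupport v u := by
  ext i
  simp [mem_dotSupport, dotR_smul_left, hr]

/-- Conformality in Rockafellar's sense: each `(w, vᵢ)` vanishes or has the sign of `(u, vᵢ)`. -/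
def SignConformal (u w : Fin n → ℝ) : Prop :=
  ∀ i, (dotR u (v i) = 0 → dotR w (v i) = 0) ∧ 0 ≤ dotR u (v i) * dotR w (v i)

namespace SignConformal

variable {v}

lemma refl (u : Fin n → ℝ) : SignConformal v u u :=
  fun _ => ⟨id, mul_self_nonneg _⟩

lemma trans {u w p : Fin n → ℝ} (huw : SignConformal v u w) (hwp : SignConformal v w p) :
    SignConformal v u p := by
  intro i
  obtain ⟨hz₁, hs₁⟩ := huw i
  obtain ⟨hz₂, hs₂⟩ := hwp i
  refine ⟨hz₂ ∘ hz₁, ?_⟩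
  rcases eq_or_ne (dotR w (v i)) 0 with hw | hw
  · simp [hz₂ hw]
  · have hprod : 0 ≤ dotR u (v i) * dotR p (v i) * dotR w (v i) ^ 2 := by
      nlinarith [mul_nonneg hs₁ hs₂]
    exact nonneg_of_mul_nonneg_left hprod (by positivity)

lemma dotSupport_subset {u w : Fin n → ℝ} (h : SignConformal v u w) :
    dotSupport v w ⊆ dotSupport v u := fun i hi => by
  rw [mem_dotSupport] at hi ⊢
  exact mt (h i).1 hi

lemma mul_nonneg {u w₁ w₂ : Fin n → ℝ} (h₁ : SignConformal v u w₁) (h₂ : SignConformal v u w₂)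
    (i : Fin m) : 0 ≤ dotR w₁ (v i) * dotR w₂ (v i) := by
  rcases eq_or_ne (dotR u (v i)) 0 with hu | hu
  · simp [(h₁ i).1 hu]
  · have hprod : 0 ≤ dotR u (v i) ^ 2 * (dotR w₁ (v i) * dotR w₂ (v i)) := by
      nlinarith [_root_.mul_nonneg (h₁ i).2 (h₂ i).2]
    exact nonneg_of_mul_nonneg_right hprod (by positivity)

end SignConformal

lemma signConformal_of_dotR_eq_mul {u w : Fin n → ℝ} {k : Fin m → ℝ}
    (hk : ∀ i, dotR w (v i) = k i * dotR u (v i)) (hk0 : ∀ i ∈ dotSupport v u, 0 ≤ k i) :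
    SignConformal v u w := by
  intro i
  rw [hk i]
  refine ⟨fun hu => by rw [hu, mul_zero], ?_⟩
  by_cases hi : i ∈ dotSupport v u
  · nlinarith [hk0 i hi, mul_self_nonneg (dotR u (v i))]
  · simp only [mem_dotSupport, not_not] at hi
    rw [hi, mul_zero, mul_zero]

lemma signConformal_add_left {u' u'' : Fin n → ℝ}
    (h : ∀ i, 0 ≤ dotR u' (v i) * dotR u'' (v i)) : SignConformal v (u' + u'') u' := by
  intro i
  have hi := h i
  rw [dotR_add_left]
  exact ⟨fun hsum => by nlinarith [mul_self_nonneg (dotR u' (v i))],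
    by nlinarith [mul_self_nonneg (dotR u' (v i))]⟩

structure ProperPart (u w : Fin n → ℝ) : Prop where
  mem_span : w ∈ Submodule.span ℝ (Set.range v)
  ne_zero : w ≠ 0
  conformal : SignConformal v u w
  dotSupport_ssubset : dotSupport v w ⊂ dotSupport v u

lemma ProperPart.not_posEq {u w : Fin n → ℝ} (h : ProperPart v u w) : ¬ PosEq u w := by
  rintro ⟨r, hr, rfl⟩
  exact (ssubset_irrefl _) (dotSupport_smul v hr.ne' u ▸ h.dotSupport_ssubset)

lemma properPart_of_dotR_eq_mul {u w : Fin n → ℝ} {k : Fin m → ℝ} {i₀ j₀ : Fin m}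
    (hw : w ∈ Submodule.span ℝ (Set.range v)) (hk : ∀ i, dotR w (v i) = k i * dotR u (v i))
    (hk0 : ∀ i ∈ dotSupport v u, 0 ≤ k i) (hi₀ : i₀ ∈ dotSupport v u) (hki₀ : k i₀ = 0)
    (hj₀ : j₀ ∈ dotSupport v u) (hkj₀ : k j₀ ≠ 0) : ProperPart v u w := by
  have hconf := signConformal_of_dotR_eq_mul v hk hk0
  refine ⟨hw, ?_, hconf, (ssubset_iff_of_subset hconf.dotSupport_subset).mpr ⟨i₀, hi₀, ?_⟩⟩
  · rintro rfl
    have := hk j₀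
    rw [dotR_zero_left, eq_comm] at this
    exact (mul_ne_zero hkj₀ ((mem_dotSupport v).mp hj₀)) this
  · simp [mem_dotSupport, hk, hki₀]

lemma dotR_eq_div_mul_of_dotSupport_subset {u d : Fin n → ℝ}
    (hsupp : dotSupport v d ⊆ dotSupport v u) (i : Fin m) :
    dotR d (v i) = dotR d (v i) / dotR u (v i) * dotR u (v i) := by
  by_cases hi : i ∈ dotSupport v u
  · exact (div_mul_cancel₀ _ ((mem_dotSupport v).mp hi)).symm
  · have hid : i ∉ dotSupport v d := fun h => hi (hsupp h)
    simp only [mem_dotSupport, not_not] at hi hid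
    rw [hi, hid, mul_zero]

lemma eq_smul_of_dotR_eq_mul {u d : Fin n → ℝ} {r : Fin m → ℝ} {ρ : ℝ}
    (hu : u ∈ Submodule.span ℝ (Set.range v)) (hd : d ∈ Submodule.span ℝ (Set.range v))
    (hdr : ∀ i, dotR d (v i) = r i * dotR u (v i)) (hconst : ∀ i ∈ dotSupport v u, r i = ρ) :
    d = ρ • u := by
  refine sub_eq_zero.mp (eq_zero_of_forall_dotR_eq_zero v
    (sub_mem hd (Submodule.smul_mem _ _ hu)) fun i => ?_)
  rw [dotR_sub_left, dotR_smul_left, hdr]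
  by_cases hi : i ∈ dotSupport v u
  · rw [hconst i hi, sub_self]
  · simp only [mem_dotSupport, not_not] at hi
    rw [hi, mul_zero, mul_zero, sub_self]

theorem exists_properPart_add_of_dotSupport_subset {u d : Fin n → ℝ} (hu0 : u ≠ 0)
    (hu : u ∈ Submodule.span ℝ (Set.range v)) (hd : d ∈ Submodule.span ℝ (Set.range v))
    (hsupp : dotSupport v d ⊆ dotSupport v u) (hline : ∀ c : ℝ, d ≠ c • u) :
    ∃ w₁ w₂, ProperPart v u w₁ ∧ ProperPart v u w₂ ∧ u = w₁ + w₂ := by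
  set r : Fin m → ℝ := fun i => dotR d (v i) / dotR u (v i)
  have hdr : ∀ i, dotR d (v i) = r i * dotR u (v i) :=
    dotR_eq_div_mul_of_dotSupport_subset v hsupp
  obtain ⟨i₀, hi₀, hmin⟩ := (dotSupport v u).exists_min_image r (dotSupport_nonempty v hu0 hu)
  obtain ⟨j₀, hj₀, hmax⟩ := (dotSupport v u).exists_max_image r (dotSupport_nonempty v hu0 hu)
  have hlt : r i₀ < r j₀ := (hmin j₀ hj₀).lt_of_ne fun hconst => hline (r i₀)
    (eq_smul_of_dotR_eq_mul v hu hd hdr fun i hi => le_antisymm (hconst ▸ hmax i hi) (hmin i hi))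
  set δ := r j₀ - r i₀
  have hδ : 0 < δ := sub_pos.mpr hlt
  refine ⟨δ⁻¹ • (d - r i₀ • u), δ⁻¹ • (r j₀ • u - d), ?_, ?_, ?_⟩
  · refine properPart_of_dotR_eq_mul v (k := fun i => δ⁻¹ * (r i - r i₀))
      (Submodule.smul_mem _ _ (sub_mem hd (Submodule.smul_mem _ _ hu)))
      (fun i => ?_) (fun i hi => ?_) hi₀ (by simp) hj₀ (by positivity)
    · rw [dotR_smul_left, dotR_sub_left, dotR_smul_left, hdr i]
      ring
    · exact mul_nonneg (inv_nonneg.mpr hδ.le) (sub_nonneg.mpr (hmin i hi))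
  · refine properPart_of_dotR_eq_mul v (k := fun i => δ⁻¹ * (r j₀ - r i))
      (Submodule.smul_mem _ _ (sub_mem (Submodule.smul_mem _ _ hu) hd))
      (fun i => ?_) (fun i hi => ?_) hj₀ (by simp) hi₀ (by positivity)
    · rw [dotR_smul_left, dotR_sub_left, dotR_smul_left, hdr i]
      ring
    · exact mul_nonneg (inv_nonneg.mpr hδ.le) (sub_nonneg.mpr (hmax i hi))
  · rw [← smul_add, show d - r i₀ • u + (r j₀ • u - d) = δ • u by module, smul_smul,
      inv_mul_cancel₀ hδ.ne', one_smul]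

lemma decomp_of_properPart_add {u w₁ w₂ : Fin n → ℝ} (h₁ : ProperPart v u w₁)
    (h₂ : ProperPart v u w₂) (hu : u = w₁ + w₂) : Decomp v u :=
  ⟨w₁, w₂, h₁.ne_zero, h₂.ne_zero, h₁.mem_span, h₂.mem_span, hu, h₁.not_posEq v, h₂.not_posEq v,
    h₁.conformal.mul_nonneg h₂.conformal⟩

lemma Decomp.exists_properPart_add {u : Fin n → ℝ} (hu0 : u ≠ 0)
    (hu : u ∈ Submodule.span ℝ (Set.range v)) (h : Decomp v u) :
    ∃ w₁ w₂, ProperPart v u w₁ ∧ ProperPart v u w₂ ∧ u = w₁ + w₂ := by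
  obtain ⟨u', u'', hu'0, -, hu', -, rfl, hp', hp'', hsign⟩ := h
  refine exists_properPart_add_of_dotSupport_subset v hu0 hu hu'
    (signConformal_add_left v hsign).dotSupport_subset fun c hc => ?_
  rcases lt_trichotomy c 0 with hc0 | rfl | hc0
  · exact hp'' ⟨1 - c, by linarith, by rw [sub_smul, one_smul, ← hc]; abel⟩
  · exact hu'0 (by simpa using hc)
  · exact hp' ⟨c, hc0, hc⟩

lemma Indecomp.exists_eq_smul {u d : Fin n → ℝ} (h : Indecomp v u)
    (hd : d ∈ Submodule.span ℝ (Set.range v)) (hsupp : dotSupport v d ⊆ dotSupport v u) :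
    ∃ c : ℝ, d = c • u := by
  by_contra! hline
  obtain ⟨w₁, w₂, h₁, h₂, hsum⟩ :=
    exists_properPart_add_of_dotSupport_subset v h.1 h.2.1 hd hsupp hline
  exact h.2.2 (decomp_of_properPart_add v h₁ h₂ hsum)

lemma posEq_or_posEq_neg_of_eq_smul {u w : Fin n → ℝ} {c : ℝ} (hc : c ≠ 0) (hw : w = c • u) :
    PosEq w u ∨ PosEq (-w) u := by
  subst hw
  rcases hc.lt_or_gt with hneg | hpos
  · exact .inr ⟨(-c)⁻¹, by simpa using hneg, by
      rw [← neg_smul, smul_smul, inv_mul_cancel₀ (neg_ne_zero.mpr hc), one_smul]⟩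
  · exact .inl ⟨c⁻¹, inv_pos.mpr hpos, by rw [smul_smul, inv_mul_cancel₀ hc, one_smul]⟩

theorem exists_finset_posEq_of_indecomp :
    ∃ T : Finset (Fin n → ℝ), ∀ u, Indecomp v u → ∃ w ∈ T, PosEq w u := by
  classical
  let rep (S : Finset (Fin m)) : Fin n → ℝ :=
    if h : ∃ w, Indecomp v w ∧ dotSupport v w = S then h.choose else 0
  refine ⟨univ.biUnion fun S => {rep S, -rep S}, fun u hu => ?_⟩
  have hex : ∃ w, Indecomp v w ∧ dotSupport v w = dotSupport v u := ⟨u, hu, rfl⟩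
  obtain ⟨hrep, hsupp⟩ : Indecomp v (rep (dotSupport v u)) ∧
      dotSupport v (rep (dotSupport v u)) = dotSupport v u := by
    simp only [rep, dif_pos hex]
    exact hex.choose_spec
  obtain ⟨c, hc⟩ := hu.exists_eq_smul v hrep.2.1 hsupp.le
  have hc0 : c ≠ 0 := by
    rintro rfl
    exact hrep.1 (by simpa using hc)
  rcases posEq_or_posEq_neg_of_eq_smul hc0 hc with h | h <;>
    exact ⟨_, mem_biUnion.mpr ⟨dotSupport v u, mem_univ _, by simp⟩, h⟩

theorem exists_list_indecomp_sum {u : Fin n → ℝ} (hu0 : u ≠ 0)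
    (hu : u ∈ Submodule.span ℝ (Set.range v)) :
    ∃ L : List (Fin n → ℝ), L.sum = u ∧ ∀ w ∈ L, Indecomp v w ∧ SignConformal v u w := by
  induction hk : (dotSupport v u).card using Nat.strong_induction_on generalizing u with
  | _ k ih =>
  by_cases hdec : Decomp v u
  · obtain ⟨w₁, w₂, h₁, h₂, rfl⟩ := Decomp.exists_properPart_add v hu0 hu hdec
    obtain ⟨L₁, hL₁, hL₁'⟩ :=
      ih _ (hk ▸ card_lt_card h₁.dotSupport_ssubset) h₁.ne_zero h₁.mem_span rfl
    obtain ⟨L₂, hL₂, hL₂'⟩ :=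
      ih _ (hk ▸ card_lt_card h₂.dotSupport_ssubset) h₂.ne_zero h₂.mem_span rfl
    refine ⟨L₁ ++ L₂, by rw [List.sum_append, hL₁, hL₂], fun w hw => ?_⟩
    rcases List.mem_append.mp hw with hw | hw
    · exact ⟨(hL₁' w hw).1, h₁.conformal.trans (hL₁' w hw).2⟩
    · exact ⟨(hL₂' w hw).1, h₂.conformal.trans (hL₂' w hw).2⟩
  · exact ⟨[u], List.sum_singleton, by simpa using ⟨⟨hu0, hu, hdec⟩, SignConformal.refl u⟩⟩

end

/-- Lemma 2.3(2): (a) up to positive scaling there are only finitely many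
`{v₁,…,vₘ}`-indecomposable vectors (i.e. finitely many indecomposable points of
`ℝP₊ⁿ⁻¹`), and (b) every nonzero vector `u` of the span decomposes as a sum
`u = u₁ + ⋯ + u_l` of indecomposable vectors with `(u,vᵢ)(uⱼ,vᵢ) ≥ 0` for all `i, j`. -/
theorem indecomposable_finite_and_decomposition {n m : ℕ} (v : Fin m → Fin n → ℝ) :
    (∃ T : Finset (Fin n → ℝ), ∀ u : Fin n → ℝ, Indecomp v u → ∃ w ∈ T, PosEq w u) ∧
    (∀ u : Fin n → ℝ, u ≠ 0 → u ∈ Submodule.span ℝ (Set.range v) →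
      ∃ (l : ℕ) (c : Fin l → Fin n → ℝ),
        (∀ j, Indecomp v (c j)) ∧ u = ∑ j, c j ∧
        ∀ (j : Fin l) (i : Fin m), 0 ≤ dotR u (v i) * dotR (c j) (v i)) := by
  refine ⟨exists_finset_posEq_of_indecomp v, fun u hu0 hu => ?_⟩
  obtain ⟨L, hsum, hL⟩ := exists_list_indecomp_sum v hu0 hu
  exact ⟨L.length, fun j => L[j], fun j => (hL _ (List.getElem_mem _)).1,
    by rw [← hsum]; exact (Fin.sum_univ_getElem L).symm,
    fun j i => ((hL _ (List.getElem_mem _)).2 i).2⟩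
end
end

section
/- Let v_1,...,v_m ∈ ℚ^n and let a_1 ≤ b_1, ..., a_m ≤ b_m be rational numbers. A vector w ∈ ℚ^n can be written as w = Σ_{i=1}^m y_i v_i for some rational numbers y_i with a_i ≤ y_i ≤ b_i for each i, if and only if w ∈ Σ_{i=1}^m ℚ v_i and for every {v_1,...,v_m}-indecomposable point [u] ∈ ℝP_+^{n-1} one has (u,w) ≤ Σ_{i=1}^m a_i·((u,v_i) − |(u,v_i)|)/2 + Σ_{i=1}^m b_i·((u,v_i) + |(u,v_i)|)/2. -/
noncomputable section

/-- The embedding `ℚ^n ⊆ ℝ^n`. -/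
def QtoR {n : ℕ} (x : Fin n → ℚ) : Fin n → ℝ := fun i => (x i : ℝ)

namespace FarkasAux

lemma dotR_add_left {n : ℕ} (x y v : Fin n → ℝ) : dotR (x + y) v = dotR x v + dotR y v := by
  simp [dotR, add_mul, Finset.sum_add_distrib]

lemma dotR_smul_left {n : ℕ} (r : ℝ) (x v : Fin n → ℝ) : dotR (r • x) v = r * dotR x v := by
  simp [dotR, Finset.mul_sum, mul_assoc]

lemma dotR_comm {n : ℕ} (x y : Fin n → ℝ) : dotR x y = dotR y x := by
  simp [dotR, mul_comm]

lemma dotR_zero_left {n : ℕ} (v : Fin n → ℝ) : dotR 0 v = 0 := by simp [dotR]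

lemma dotR_sum_smul_right {n m : ℕ} (x : Fin n → ℝ) (y : Fin m → ℝ) (V : Fin m → Fin n → ℝ) :
    dotR x (∑ i, y i • V i) = ∑ i, y i * dotR x (V i) := by
  simp only [dotR, Finset.sum_apply, Pi.smul_apply, smul_eq_mul, Finset.mul_sum]
  rw [Finset.sum_comm]
  exact Finset.sum_congr rfl fun i _ => Finset.sum_congr rfl fun j _ => by ring

lemma dotR_add_right {n : ℕ} (x y v : Fin n → ℝ) : dotR v (x + y) = dotR v x + dotR v y := by
  simp [dotR, mul_add, Finset.sum_add_distrib]

lemma dotR_smul_right {n : ℕ} (r : ℝ) (x v : Fin n → ℝ) : dotR v (r • x) = r * dotR v x := by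
  simp [dotR, Finset.mul_sum]; exact Finset.sum_congr rfl fun j _ => by ring

lemma continuous_dotR {n : ℕ} (v : Fin n → ℝ) : Continuous fun x => dotR x v := by
  unfold dotR
  exact continuous_finset_sum _ fun i _ => (continuous_apply i).mul continuous_const

lemma dotR_self_nonneg {n : ℕ} (x : Fin n → ℝ) : 0 ≤ dotR x x :=
  Finset.sum_nonneg fun i _ => mul_self_nonneg _

lemma eq_zero_of_dotR_self {n : ℕ} (x : Fin n → ℝ) (h : dotR x x = 0) : x = 0 := by
  funext j
  have h2 := (Finset.sum_eq_zero_iff_of_nonneg (fun i _ => mul_self_nonneg (x i))).mp h j (Finset.mem_univ j)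
  have := mul_self_eq_zero.mp h2
  simpa using this

lemma dotR_self_pos {n : ℕ} (x : Fin n → ℝ) (hx : x ≠ 0) : 0 < dotR x x :=
  lt_of_le_of_ne (dotR_self_nonneg x) (fun h => hx (eq_zero_of_dotR_self x h.symm))

lemma dotR_cast {n : ℕ} (x y : Fin n → ℚ) :
    dotR (QtoR x) (QtoR y) = ((∑ i, x i * y i : ℚ) : ℝ) := by
  simp [dotR, QtoR]

lemma castSum {n m : ℕ} (y : Fin m → ℚ) (v : Fin m → Fin n → ℚ) :
    QtoR (∑ i, y i • v i) = ∑ i, ((y i : ℝ)) • QtoR (v i) := by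
  funext j
  simp [QtoR, Finset.sum_apply, Pi.smul_apply, smul_eq_mul]

end FarkasAux

namespace FarkasAux

lemma dense_rat_pi {m : ℕ} (z : Fin m → ℝ) : z ∈ closure (Set.range (QtoR (n := m))) := by
  rw [Metric.mem_closure_iff]
  intro ε hε
  choose q hq using fun i => exists_rat_near (z i) hε
  refine ⟨QtoR q, Set.mem_range_self _, ?_⟩
  rw [dist_pi_lt_iff hε]
  intro i
  simpa [QtoR, Real.dist_eq, abs_sub_comm] using hq i

lemma lemD {m : ℕ} {κ : Type} [DecidableEq κ] (r : κ → Fin m → ℚ) (c : κ → ℚ)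
    (s : Finset κ) (z : Fin m → ℝ) (hz : ∀ k ∈ s, dotR z (QtoR (r k)) = (c k : ℝ)) :
    z ∈ closure (QtoR '' {y : Fin m → ℚ | ∀ k ∈ s, ∑ i, y i * r k i = c k}) := by
  classical
  induction s using Finset.induction_on generalizing z with
  | empty =>
      have h1 : {y : Fin m → ℚ | ∀ k ∈ (∅ : Finset κ), ∑ i, y i * r k i = c k} = Set.univ := by
        ext y; simp
      rw [h1, Set.image_univ]
      exact dense_rat_pi z
  | @insert k s hk ih =>
      have hzk : dotR z (QtoR (r k)) = (c k : ℝ) := hz k (Finset.mem_insert_self _ _)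
      have hzs : ∀ k' ∈ s, dotR z (QtoR (r k')) = (c k' : ℝ) :=
        fun k' h => hz k' (Finset.mem_insert_of_mem h)
      have hIH := ih z hzs
      set SolS := {y : Fin m → ℚ | ∀ k' ∈ s, ∑ i, y i * r k' i = c k'} with hSolS
      by_cases hcase : ∃ y0 ∈ SolS, ∃ y1 ∈ SolS, (∑ i, y0 i * r k i) ≠ (∑ i, y1 i * r k i)
      · obtain ⟨y0, hy0, y1, hy1, hne⟩ := hcase
        set dQ : Fin m → ℚ := y1 - y0 with hdQ
        have hdsum : ∀ k' : κ, (∑ i, dQ i * r k' i)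
            = (∑ i, y1 i * r k' i) - ∑ i, y0 i * r k' i := by
          intro k'
          rw [← Finset.sum_sub_distrib]
          exact Finset.sum_congr rfl fun i _ => by simp [hdQ]; ring
        have hρ : (∑ i, dQ i * r k i) ≠ 0 := by
          rw [hdsum k]
          exact sub_ne_zero.mpr (Ne.symm hne)
        set ρ : ℚ := ∑ i, dQ i * r k i with hρdef
        set πQ : (Fin m → ℚ) → (Fin m → ℚ) :=
          fun y => y + ((c k - ∑ i, y i * r k i) / ρ) • dQ with hπQ
        set πR : (Fin m → ℝ) → (Fin m → ℝ) :=
          fun z' => z' + (((c k : ℝ) - dotR z' (QtoR (r k))) / (ρ : ℝ)) • QtoR dQ with hπR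
        have hcont : Continuous πR := by
          apply Continuous.add continuous_id
          exact Continuous.smul ((continuous_const.sub (continuous_dotR _)).div_const _)
            continuous_const
        have hπz : πR z = z := by simp [hπR, hzk]
        have hcomm : ∀ y : Fin m → ℚ, πR (QtoR y) = QtoR (πQ y) := by
          intro y
          funext j
          have hdc : dotR (QtoR y) (QtoR (r k)) = ((∑ i, y i * r k i : ℚ) : ℝ) := dotR_cast _ _
          simp only [hπR, hπQ, Pi.add_apply, Pi.smul_apply, smul_eq_mul, QtoR, hdc]
          push_cast
          ring
        have hmain : πR '' (QtoR '' SolS)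
            ⊆ QtoR '' {y | ∀ k' ∈ insert k s, ∑ i, y i * r k' i = c k'} := by
          rintro _ ⟨_, ⟨y, hy, rfl⟩, rfl⟩
          refine ⟨πQ y, ?_, (hcomm y).symm⟩
          intro k' hk'
          have hexp : (∑ i, (πQ y) i * r k' i)
              = (∑ i, y i * r k' i) + ((c k - ∑ i, y i * r k i) / ρ) * (∑ i, dQ i * r k' i) := by
            simp only [hπQ, Pi.add_apply, Pi.smul_apply, smul_eq_mul]
            rw [Finset.mul_sum, ← Finset.sum_add_distrib]
            exact Finset.sum_congr rfl fun i _ => by ring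
          rcases Finset.mem_insert.mp hk' with rfl | hk's
          · rw [hexp, ← hρdef, div_mul_cancel₀ _ hρ]; ring
          · have h0 : (∑ i, dQ i * r k' i) = 0 := by
              rw [hdsum k', hy1 k' hk's, hy0 k' hk's, sub_self]
            rw [hexp, h0, mul_zero, add_zero]
            exact hy k' hk's
        have : z ∈ closure (πR '' (QtoR '' SolS)) := by
          rw [← hπz]
          exact image_closure_subset_closure_image hcont ⟨z, hIH, rfl⟩
        exact closure_mono hmain this
      · push_neg at hcase
        have hne2 : (QtoR '' SolS).Nonempty := by
          by_contra h
          rw [Set.not_nonempty_iff_eq_empty] at h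
          rw [h, closure_empty] at hIH
          exact hIH
        obtain ⟨_, ⟨y0, hy0, rfl⟩⟩ := hne2
        have hconst : ∀ y ∈ SolS, (∑ i, y i * r k i) = ∑ i, y0 i * r k i :=
          fun y hy => hcase y hy y0 hy0
        have hγ : ((∑ i, y0 i * r k i : ℚ) : ℝ) = (c k : ℝ) := by
          have hsub : QtoR '' SolS ⊆ {z' : Fin m → ℝ |
              dotR z' (QtoR (r k)) = ((∑ i, y0 i * r k i : ℚ) : ℝ)} := by
            rintro _ ⟨y, hy, rfl⟩
            show dotR (QtoR y) (QtoR (r k)) = _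
            rw [dotR_cast]
            exact congrArg (fun q : ℚ => (q : ℝ)) (hconst y hy)
          have hclosed : IsClosed {z' : Fin m → ℝ |
              dotR z' (QtoR (r k)) = ((∑ i, y0 i * r k i : ℚ) : ℝ)} :=
            isClosed_eq (continuous_dotR _) continuous_const
          have := closure_minimal hsub hclosed hIH
          rw [← this]
          exact hzk
        refine closure_mono ?_ hIH
        apply Set.image_mono
        intro y hy k' hk'
        rcases Finset.mem_insert.mp hk' with rfl | h
        · rw [hconst y hy]; exact_mod_cast hγ
        · exact hy k' h

end FarkasAux

namespace FarkasAux

lemma stepB {n m : ℕ} (v : Fin m → Fin n → ℚ) (a b : Fin m → ℚ) (hab : ∀ i, a i ≤ b i)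
    (w : Fin n → ℚ) (yr : Fin m → ℝ)
    (hbd : ∀ i, (a i : ℝ) ≤ yr i ∧ yr i ≤ (b i : ℝ))
    (heq : QtoR w = ∑ i, yr i • QtoR (v i)) :
    ∃ y : Fin m → ℚ, (∀ i, a i ≤ y i ∧ y i ≤ b i) ∧ w = ∑ i, y i • v i := by
  classical
  set r : (Fin n ⊕ Fin m) → Fin m → ℚ :=
    fun k => Sum.rec (fun j => fun i => v i j) (fun i0 => fun i => if i = i0 then 1 else 0) k
    with hr
  set c : (Fin n ⊕ Fin m) → ℚ :=
    fun k => Sum.rec (fun j => w j) (fun i0 => if (yr i0 = (a i0 : ℝ)) then a i0 else b i0) k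
    with hc
  set P : Fin m → Prop := fun i => (a i : ℝ) < yr i ∧ yr i < (b i : ℝ) with hP
  set s : Finset (Fin n ⊕ Fin m) :=
    Finset.univ.filter (fun k => Sum.rec (fun _ => True) (fun i0 => ¬ P i0) k) with hs
  -- the constraints hold for yr
  have hdot_single : ∀ (z : Fin m → ℝ) (i0 : Fin m),
      dotR z (QtoR (fun i => if i = i0 then (1:ℚ) else 0)) = z i0 := by
    intro z i0
    simp [dotR, QtoR, apply_ite, mul_ite, Finset.sum_ite_eq']
  have hfrozen : ∀ i0 : Fin m, ¬ P i0 → yr i0 = ((c (Sum.inr i0)) : ℝ) := by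
    intro i0 hnp
    simp only [hP, not_and_or, not_lt] at hnp
    simp only [hc]
    by_cases hcc : yr i0 = (a i0 : ℝ)
    · rw [if_pos hcc]; exact hcc
    · rw [if_neg hcc]
      rcases hnp with h | h
      · exact absurd (le_antisymm h (hbd i0).1) hcc
      · exact le_antisymm (hbd i0).2 h
  have hconstr : ∀ k ∈ s, dotR yr (QtoR (r k)) = ((c k) : ℝ) := by
    intro k hk
    rcases k with j | i0
    · have : dotR yr (QtoR (fun i => v i j)) = ∑ i, yr i * ((v i j : ℝ)) := by
        simp [dotR, QtoR, mul_comm]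
      rw [hr, hc]
      have h2 := congrFun heq j
      simp only [QtoR, Finset.sum_apply, Pi.smul_apply, smul_eq_mul] at h2
      simpa [dotR, QtoR] using h2.symm
    · have hnp : ¬ P i0 := by
        simp only [hs, Finset.mem_filter] at hk
        exact hk.2
      rw [hr]
      rw [hdot_single yr i0]
      exact hfrozen i0 hnp
  have hclos := lemD r c s yr hconstr
  -- open neighborhood forcing strict bounds on P-coordinates
  set O : Set (Fin m → ℝ) := {z | ∀ i, P i → ((a i : ℝ) < z i ∧ z i < (b i : ℝ))} with hO
  have hOopen : IsOpen O := by
    have : O = ⋂ i, {z : Fin m → ℝ | P i → ((a i : ℝ) < z i ∧ z i < (b i : ℝ))} := by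
      ext z; simp [hO, Set.mem_iInter]
    rw [this]
    apply isOpen_iInter_of_finite
    intro i
    by_cases hPi : P i
    · have : {z : Fin m → ℝ | P i → ((a i : ℝ) < z i ∧ z i < (b i : ℝ))}
          = (fun z : Fin m → ℝ => z i) ⁻¹' (Set.Ioo (a i : ℝ) (b i : ℝ)) := by
        ext z
        simp only [Set.mem_setOf_eq, Set.mem_preimage, Set.mem_Ioo]
        exact ⟨fun h => h hPi, fun h _ => h⟩
      rw [this]
      exact isOpen_Ioo.preimage (continuous_apply i)
    · have : {z : Fin m → ℝ | P i → ((a i : ℝ) < z i ∧ z i < (b i : ℝ))} = Set.univ := by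
        ext z
        simp only [Set.mem_setOf_eq, Set.mem_univ, iff_true]
        exact fun hPi2 => absurd hPi2 hPi
      rw [this]; exact isOpen_univ
  have hyrO : yr ∈ O := fun i hPi => hPi
  obtain ⟨_, hzO, ⟨y, hy, rfl⟩⟩ := _root_.mem_closure_iff.mp hclos O hOopen hyrO
  refine ⟨y, ?_, ?_⟩
  · intro i
    by_cases hPi : P i
    · have h1 := (hzO i hPi).1
      have h2 := (hzO i hPi).2
      have h1' : (a i : ℝ) < (y i : ℝ) := by simpa [QtoR] using h1
      have h2' : ((y i : ℝ)) < (b i : ℝ) := by simpa [QtoR] using h2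
      exact ⟨(by exact_mod_cast h1'.le), (by exact_mod_cast h2'.le)⟩
    · have hmem : Sum.inr i ∈ s := by simp [hs, hPi]
      have := hy (Sum.inr i) hmem
      have hyi : y i = c (Sum.inr i) := by
        simpa [hr, mul_ite, Finset.sum_ite_eq'] using this
      rw [hyi, hc]
      by_cases hcc : yr i = (a i : ℝ)
      · simp only [if_pos hcc]; exact ⟨le_refl _, hab i⟩
      · simp only [if_neg hcc]; exact ⟨hab i, le_refl _⟩
  · funext j
    have hmem : Sum.inl j ∈ s := by simp [hs]
    have := hy (Sum.inl j) hmem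
    simp only [hr, hc] at this
    simp only [Finset.sum_apply, Pi.smul_apply, smul_eq_mul]
    exact this.symm

end FarkasAux

namespace FarkasAux

lemma proj_exists {n : ℕ} (S : Submodule ℝ (Fin n → ℝ)) (u : Fin n → ℝ) :
    ∃ p q : Fin n → ℝ, p ∈ S ∧ u = p + q ∧ ∀ x ∈ S, dotR q x = 0 := by
  let e : EuclideanSpace ℝ (Fin n) ≃ₗ[ℝ] (Fin n → ℝ) := WithLp.linearEquiv 2 ℝ (Fin n → ℝ)
  let S' : Submodule ℝ (EuclideanSpace ℝ (Fin n)) := S.comap e.toLinearMap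
  obtain ⟨y, hy, z, hz, hyz⟩ := S'.exists_add_mem_mem_orthogonal (e.symm u)
  refine ⟨e y, e z, hy, ?_, ?_⟩
  · have h := congrArg e hyz
    rw [e.apply_symm_apply, map_add] at h
    exact h
  · intro x hx
    have hx' : e.symm x ∈ S' := by
      simp only [S', Submodule.mem_comap, LinearEquiv.coe_coe, e.apply_symm_apply]
      exact hx
    have h0 := (Submodule.mem_orthogonal S' z).mp hz (e.symm x) hx'
    have h1 : dotR (e z) x = (inner (𝕜 := ℝ) (e.symm x) z : ℝ) := by
      simp [dotR, PiLp.inner_apply, RCLike.inner_apply, conj_trivial, e, mul_comm]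
    rw [h1, h0]

lemma sign_aux (e d' d'' : ℝ) (he : e = 1 ∨ e = -1) (hsum : 0 ≤ e * (d' + d''))
    (hprod : 0 ≤ d' * d'') : 0 ≤ e * d' ∧ 0 ≤ e * d'' := by
  have key : ∀ x y : ℝ, 0 ≤ x + y → 0 ≤ x * y → 0 ≤ x ∧ 0 ≤ y := by
    intro x y hs hp
    constructor
    · by_contra hx
      push_neg at hx
      have hy : y ≤ 0 := by
        by_contra hy
        push_neg at hy
        exact absurd hp (not_le.mpr (mul_neg_of_neg_of_pos hx hy))
      linarith
    · by_contra hy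
      push_neg at hy
      have hx : x ≤ 0 := by
        by_contra hx
        push_neg at hx
        exact absurd hp (not_le.mpr (mul_neg_of_pos_of_neg hx hy))
      linarith
  rcases he with rfl | rfl
  · simp only [one_mul] at hsum ⊢
    exact key d' d'' hsum hprod
  · have h2 := key (-d') (-d'') (by nlinarith) (by nlinarith)
    exact ⟨by linarith [h2.1], by linarith [h2.2]⟩

lemma convex_key (t1 t2 A B C X : ℝ) (ht1 : 0 < t1) (ht2 : 0 < t2) (hsum : t1 + t2 = 1)
    (hX : X = t1*t1*A + 2*t1*t2*B + t2*t2*C) (hQd : 0 < A - 2*B + C)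
    (hA : A ≤ X) (hC : C ≤ X) : False := by
  have h : t2 = 1 - t1 := by linarith
  subst h
  nlinarith [mul_nonneg ht1.le (sub_nonneg.mpr hA),
    mul_nonneg ht2.le (sub_nonneg.mpr hC),
    mul_pos (mul_pos ht1 ht2) hQd]

lemma hdexpand {n : ℕ} (r s : ℝ) (x y : Fin n → ℝ) :
    dotR (r • x + s • y) (r • x + s • y)
      = r*r*dotR x x + 2*r*s*dotR x y + s*s*dotR y y := by
  simp only [dotR_add_left, dotR_add_right, dotR_smul_left, dotR_smul_right]
  rw [dotR_comm y x]
  ring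

lemma hsubexpand {n : ℕ} (x y : Fin n → ℝ) :
    dotR (x - y) (x - y) = dotR x x - 2*dotR x y + dotR y y := by
  have h : x - y = (1:ℝ) • x + (-1:ℝ) • y := by
    rw [one_smul, neg_one_smul]; exact sub_eq_add_neg x y
  rw [h, hdexpand]
  ring

lemma stepA {n m : ℕ} (V : Fin m → Fin n → ℝ) (a b : Fin m → ℝ) (hab : ∀ i, a i ≤ b i)
    (W : Fin n → ℝ) (hWspan : W ∈ Submodule.span ℝ (Set.range V))
    (hu : ∀ u : Fin n → ℝ, Indecomp V u →
      dotR u W ≤ ∑ i, a i * ((dotR u (V i) - |dotR u (V i)|) / 2)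
        + ∑ i, b i * ((dotR u (V i) + |dotR u (V i)|) / 2)) :
    ∃ yr : Fin m → ℝ, (∀ i, a i ≤ yr i ∧ yr i ≤ b i) ∧ W = ∑ i, yr i • V i := by
  classical
  by_contra hcon
  set S := Submodule.span ℝ (Set.range V) with hS
  set T : (Fin m → ℝ) →ₗ[ℝ] (Fin n → ℝ) :=
    { toFun := fun y => ∑ i, y i • V i
      map_add' := by intro y z; simp [add_smul, Finset.sum_add_distrib]
      map_smul' := by intro r y; simp [mul_smul, Finset.smul_sum] } with hT
  set K : Set (Fin n → ℝ) := T '' (Set.univ.pi fun i => Set.Icc (a i) (b i)) with hK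
  have hWK : W ∉ K := by
    rintro ⟨y, hy, hTy⟩
    exact hcon ⟨y, fun i => by simpa using hy i (Set.mem_univ i), hTy.symm⟩
  have hKconv : Convex ℝ K :=
    (convex_pi (fun i _ => convex_Icc _ _)).linear_image T
  have hKcomp : IsCompact K :=
    ((isCompact_univ_pi fun i => isCompact_Icc).image T.continuous_of_finiteDimensional)
  obtain ⟨f, tt, hfK, hfW⟩ := geometric_hahn_banach_closed_point hKconv hKcomp.isClosed hWK
  set u0 : Fin n → ℝ := fun j => f (fun j' => if j = j' then 1 else 0) with hu0
  have hf : ∀ x, f x = dotR x u0 := by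
    intro x
    have h := (f : (Fin n → ℝ) →ₗ[ℝ] ℝ).pi_apply_eq_sum_univ x
    simpa [dotR, hu0, smul_eq_mul] using h
  obtain ⟨p, q, hpS, hu0pq, hq⟩ := proj_exists S u0
  have hdup : ∀ x ∈ S, dotR x u0 = dotR x p := by
    intro x hx
    rw [hu0pq, dotR_add_right, dotR_comm x q, hq x hx, add_zero]
  set ε : Fin m → ℝ := fun i => if 0 ≤ dotR p (V i) then 1 else -1 with hε
  set κ : Fin m → ℝ := fun i => if 0 ≤ dotR p (V i) then b i else a i with hκ
  have hεpm : ∀ i, ε i = 1 ∨ ε i = -1 := by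
    intro i; by_cases h : 0 ≤ dotR p (V i)
    · left; simp [hε, h]
    · right; simp [hε, h]
  set φ : (Fin n → ℝ) → ℝ := fun x => ∑ i, ε i * dotR x (V i) with hφ
  set g : (Fin n → ℝ) → ℝ := fun x => dotR x W - ∑ i, κ i * dotR x (V i) with hg
  have hVS : ∀ i, V i ∈ S := fun i => Submodule.subset_span ⟨i, rfl⟩
  -- g p > 0
  have hκK : T κ ∈ K := by
    refine ⟨κ, fun i _ => ?_, rfl⟩
    by_cases h : 0 ≤ dotR p (V i)
    · simp only [hκ, if_pos h]; exact ⟨hab i, le_refl _⟩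
    · simp only [hκ, if_neg h]; exact ⟨le_refl _, hab i⟩
  have hgp : 0 < g p := by
    have e1 : f (T κ) = ∑ i, κ i * dotR p (V i) := by
      rw [hf]
      have h1 : dotR (T κ) u0 = dotR u0 (T κ) := dotR_comm _ _
      have h2 : dotR u0 (T κ) = ∑ i, κ i * dotR u0 (V i) := dotR_sum_smul_right _ _ _
      rw [h1, h2]
      refine Finset.sum_congr rfl fun i _ => ?_
      rw [dotR_comm u0 (V i), hdup (V i) (hVS i), dotR_comm (V i) p]
    have e2 : f W = dotR p W := by
      rw [hf, hdup W hWspan, dotR_comm W p]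
    have h1 := hfK _ hκK
    have h2 := hfW
    rw [e1] at h1
    rw [e2] at h2
    simp only [hg]
    linarith
  have hZ : ∀ x ∈ S, (∀ i, dotR x (V i) = 0) → x = 0 := by
    intro x hx h0
    obtain ⟨cc, hcc⟩ := (Submodule.mem_span_range_iff_exists_fun ℝ).mp hx
    apply eq_zero_of_dotR_self
    calc dotR x x = dotR x (∑ i, cc i • V i) := by rw [hcc]
    _ = ∑ i, cc i * dotR x (V i) := dotR_sum_smul_right _ _ _
    _ = 0 := by simp [h0]
  have hφpos : ∀ x, x ∈ S → (∀ i, 0 ≤ ε i * dotR x (V i)) → x ≠ 0 → 0 < φ x := by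
    intro x hx hsgn hx0
    have hge : 0 ≤ φ x := Finset.sum_nonneg fun i _ => hsgn i
    rcases hge.lt_or_eq with h | h
    · exact h
    · exfalso
      have h0 : ∀ i ∈ Finset.univ, ε i * dotR x (V i) = 0 :=
        (Finset.sum_eq_zero_iff_of_nonneg (fun i _ => hsgn i)).mp h.symm
      have hd0 : ∀ i, dotR x (V i) = 0 := by
        intro i
        have h1 := h0 i (Finset.mem_univ i)
        rcases hεpm i with he | he <;> rw [he] at h1 <;> linarith
      exact hx0 (hZ x hx hd0)
  have hp0 : p ≠ 0 := by
    intro h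
    rw [h] at hgp
    simp [hg, dotR_zero_left] at hgp
  have hpsgn : ∀ i, 0 ≤ ε i * dotR p (V i) := by
    intro i
    by_cases h : 0 ≤ dotR p (V i)
    · simp only [hε, if_pos h, one_mul]; exact h
    · simp only [hε, if_neg h, neg_one_mul]; linarith [not_le.mp h]
  have hφp : 0 < φ p := hφpos p hpS hpsgn hp0
  have hφsmul : ∀ (r : ℝ) x, φ (r • x) = r * φ x := by
    intro r x
    simp only [hφ, dotR_smul_left, Finset.mul_sum]
    exact Finset.sum_congr rfl fun i _ => by ring
  have hgsmul : ∀ (r : ℝ) x, g (r • x) = r * g x := by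
    intro r x
    simp only [hg, dotR_smul_left, mul_sub, Finset.mul_sum]
    congr 1
    exact Finset.sum_congr rfl fun i _ => by ring
  have hφadd : ∀ x y, φ (x + y) = φ x + φ y := by
    intro x y
    simp only [hφ, dotR_add_left, mul_add]
    rw [Finset.sum_add_distrib]
  have hgadd : ∀ x y, g (x + y) = g x + g y := by
    intro x y
    simp only [hg, dotR_add_left, mul_add]
    rw [Finset.sum_add_distrib]
    ring
  have hsmulsgn : ∀ (r : ℝ) (x : Fin n → ℝ), 0 ≤ r → (∀ i, 0 ≤ ε i * dotR x (V i)) →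
      ∀ i, 0 ≤ ε i * dotR (r • x) (V i) := by
    intro r x hr hs i
    rw [dotR_smul_left]
    have h : ε i * (r * dotR x (V i)) = r * (ε i * dotR x (V i)) := by ring
    rw [h]
    exact mul_nonneg hr (hs i)
  set B : Set (Fin n → ℝ) := {x | x ∈ S ∧ (∀ i, 0 ≤ ε i * dotR x (V i)) ∧ φ x = 1} with hB
  have hptB : (φ p)⁻¹ • p ∈ B := by
    refine ⟨S.smul_mem _ hpS, hsmulsgn _ _ (inv_pos.mpr hφp).le hpsgn, ?_⟩
    rw [hφsmul, inv_mul_cancel₀ (ne_of_gt hφp)]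
  have hgpt : 0 < g ((φ p)⁻¹ • p) := by
    rw [hgsmul]
    exact mul_pos (inv_pos.mpr hφp) hgp
  have hScl : IsClosed (S : Set (Fin n → ℝ)) := Submodule.closed_of_finiteDimensional S
  have hφcont : Continuous φ :=
    continuous_finset_sum _ fun i _ => continuous_const.mul (continuous_dotR _)
  have hgcont : Continuous g :=
    (continuous_dotR W).sub (continuous_finset_sum _ fun i _ =>
      continuous_const.mul (continuous_dotR _))
  have hBclosed : IsClosed B := by
    have hBeq : B = (S : Set (Fin n → ℝ)) ∩
        ((⋂ i, {x | 0 ≤ ε i * dotR x (V i)}) ∩ {x | φ x = 1}) := by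
      ext x
      constructor
      · rintro ⟨h1, h2, h3⟩
        exact ⟨h1, Set.mem_iInter.mpr h2, h3⟩
      · rintro ⟨h1, h2, h3⟩
        exact ⟨h1, Set.mem_iInter.mp h2, h3⟩
    rw [hBeq]
    exact hScl.inter ((isClosed_iInter fun i =>
      isClosed_le continuous_const (continuous_const.mul (continuous_dotR _))).inter
      (isClosed_eq hφcont continuous_const))
  -- boundedness
  set Tm : (Fin n → ℝ) →ₗ[ℝ] (Fin m → ℝ) :=
    { toFun := fun x => fun i => dotR x (V i)
      map_add' := by intro x y; funext i; exact dotR_add_left _ _ _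
      map_smul' := by intro r x; funext i; simp [dotR_smul_left] } with hTm
  set Tres : ↥S →ₗ[ℝ] (Fin m → ℝ) := Tm.comp S.subtype with hTres
  have hinj : Function.Injective Tres := by
    rw [← LinearMap.ker_eq_bot, Submodule.eq_bot_iff]
    intro x hx
    rw [LinearMap.mem_ker] at hx
    have hx2 : ∀ i, dotR (x : Fin n → ℝ) (V i) = 0 := fun i => congrFun hx i
    exact Subtype.ext (hZ x x.2 hx2)
  set e2 : ↥S ≃ₗ[ℝ] ↥(LinearMap.range Tres) := LinearEquiv.ofInjective Tres hinj with he2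
  set E2 := e2.toContinuousLinearEquiv with hE2
  set CC := ‖(E2.symm : ↥(LinearMap.range Tres) →L[ℝ] ↥S)‖ with hCC
  have hbound : ∀ x ∈ B, ‖x‖ ≤ CC := by
    intro x hx
    set xs : ↥S := ⟨x, hx.1⟩ with hxs
    have h1 : ‖Tres xs‖ ≤ 1 := by
      rw [pi_norm_le_iff_of_nonneg zero_le_one]
      intro i
      have habs : |dotR x (V i)| = ε i * dotR x (V i) := by
        have hsi := hx.2.1 i
        rcases hεpm i with he | he <;> rw [he] at hsi ⊢
        · rw [one_mul] at hsi ⊢; exact abs_of_nonneg hsi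
        · rw [neg_one_mul] at hsi ⊢; exact abs_of_nonpos (by linarith)
      have hc : Tres xs i = dotR x (V i) := rfl
      rw [hc, Real.norm_eq_abs, habs]
      calc ε i * dotR x (V i) ≤ φ x :=
            Finset.single_le_sum (fun j _ => hx.2.1 j) (Finset.mem_univ i)
      _ = 1 := hx.2.2
    have hnorm_eq : ‖E2 xs‖ = ‖Tres xs‖ := by
      have hcoe : ((E2 xs : ↥(LinearMap.range Tres)) : Fin m → ℝ) = Tres xs := by
        have h1 : E2 xs = e2 xs := rfl
        rw [h1, he2]
        exact LinearEquiv.ofInjective_apply Tres xs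
      rw [← hcoe]
      rfl
    have h2 : ‖xs‖ ≤ CC * ‖Tres xs‖ := by
      have hback : xs = E2.symm (E2 xs) := (E2.symm_apply_apply xs).symm
      calc ‖xs‖ = ‖E2.symm (E2 xs)‖ := by rw [← hback]
      _ ≤ CC * ‖E2 xs‖ := (E2.symm : ↥(LinearMap.range Tres) →L[ℝ] ↥S).le_opNorm _
      _ = CC * ‖Tres xs‖ := by rw [hnorm_eq]
    have h3 : ‖x‖ = ‖xs‖ := rfl
    rw [h3]
    calc ‖xs‖ ≤ CC * ‖Tres xs‖ := h2
    _ ≤ CC * 1 := mul_le_mul_of_nonneg_left h1 (by rw [hCC]; exact ContinuousLinearMap.opNorm_nonneg _)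
    _ = CC := mul_one CC
  have hBbdd : Bornology.IsBounded B := by
    apply Bornology.IsBounded.subset (Metric.isBounded_closedBall (x := (0 : Fin n → ℝ)) (r := CC))
    intro x hx
    rw [Metric.mem_closedBall, dist_zero_right]
    exact hbound x hx
  have hBcomp : IsCompact B := Metric.isCompact_of_isClosed_isBounded hBclosed hBbdd
  obtain ⟨x1, hx1B, hx1max⟩ := hBcomp.exists_isMaxOn ⟨_, hptB⟩ hgcont.continuousOn
  have hMpos : 0 < g x1 := lt_of_lt_of_le hgpt (hx1max hptB)
  set SS : Set (Fin n → ℝ) := B ∩ {x | g x = g x1} with hSS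
  have hSScomp : IsCompact SS := hBcomp.inter_right (isClosed_eq hgcont continuous_const)
  have hQcont : Continuous (fun x : Fin n → ℝ => dotR x x) := by
    unfold dotR
    exact continuous_finset_sum _ fun i _ => (continuous_apply i).mul (continuous_apply i)
  obtain ⟨xx, hxxSS, hxxmax⟩ := hSScomp.exists_isMaxOn ⟨x1, hx1B, rfl⟩ hQcont.continuousOn
  have hxxB : xx ∈ B := hxxSS.1
  have hgxx : g xx = g x1 := hxxSS.2
  have hxx0 : xx ≠ 0 := by
    intro h
    have h2 := hxxB.2.2
    rw [h] at h2
    simp [hφ, dotR_zero_left] at h2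
  have hxsInd : Indecomp V xx := by
    refine ⟨hxx0, hxxB.1, ?_⟩
    rintro ⟨u', u'', hne', hne'', hsp', hsp'', hsum, hpe', hpe'', hsgn⟩
    have hsgn' : ∀ i, 0 ≤ ε i * dotR u' (V i) ∧ 0 ≤ ε i * dotR u'' (V i) := by
      intro i
      have hx := hxxB.2.1 i
      rw [hsum, dotR_add_left] at hx
      exact sign_aux (ε i) _ _ (hεpm i) hx (hsgn i)
    have ht' : 0 < φ u' := hφpos u' hsp' (fun i => (hsgn' i).1) hne'
    have ht'' : 0 < φ u'' := hφpos u'' hsp'' (fun i => (hsgn' i).2) hne''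
    have hsum1 : φ u' + φ u'' = 1 := by
      rw [← hφadd, ← hsum]
      exact hxxB.2.2
    set w' := (φ u')⁻¹ • u' with hw'
    set w'' := (φ u'')⁻¹ • u'' with hw''
    have hrecover' : (φ u') • w' = u' := by
      rw [hw', smul_smul, mul_inv_cancel₀ (ne_of_gt ht'), one_smul]
    have hrecover'' : (φ u'') • w'' = u'' := by
      rw [hw'', smul_smul, mul_inv_cancel₀ (ne_of_gt ht''), one_smul]
    have hw'B : w' ∈ B :=
      ⟨S.smul_mem _ hsp', hsmulsgn _ _ (inv_pos.mpr ht').le (fun i => (hsgn' i).1),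
        by rw [hφsmul, inv_mul_cancel₀ (ne_of_gt ht')]⟩
    have hw''B : w'' ∈ B :=
      ⟨S.smul_mem _ hsp'', hsmulsgn _ _ (inv_pos.mpr ht'').le (fun i => (hsgn' i).2),
        by rw [hφsmul, inv_mul_cancel₀ (ne_of_gt ht'')]⟩
    have hgw'le : g w' ≤ g x1 := hx1max hw'B
    have hgw''le : g w'' ≤ g x1 := hx1max hw''B
    have hgu' : g u' = (φ u') * g w' := by
      conv_lhs => rw [← hrecover']
      rw [hgsmul]
    have hgu'' : g u'' = (φ u'') * g w'' := by
      conv_lhs => rw [← hrecover'']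
      rw [hgsmul]
    have hgdecomp : g x1 = (φ u') * g w' + (φ u'') * g w'' := by
      rw [← hgxx, hsum, hgadd, hgu', hgu'']
    have hkey : (φ u' + φ u'') * g x1 = g x1 := by rw [hsum1, one_mul]
    have hgw' : g w' = g x1 := by
      by_contra hlt
      have h1 : g w' < g x1 := lt_of_le_of_ne hgw'le hlt
      linarith [mul_lt_mul_of_pos_left h1 ht',
        mul_le_mul_of_nonneg_left hgw''le ht''.le, hgdecomp, hkey]
    have hgw'' : g w'' = g x1 := by
      by_contra hlt
      have h1 : g w'' < g x1 := lt_of_le_of_ne hgw''le hlt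
      linarith [mul_lt_mul_of_pos_left h1 ht'',
        mul_le_mul_of_nonneg_left hgw'le ht'.le, hgdecomp, hkey]
    have hw'SS : w' ∈ SS := ⟨hw'B, hgw'⟩
    have hw''SS : w'' ∈ SS := ⟨hw''B, hgw''⟩
    have hxseq2 : xx = (φ u') • w' + (φ u'') • w'' := by
      rw [hrecover', hrecover'']
      exact hsum
    have hwne : w' ≠ w'' := by
      intro hEq
      apply hpe'
      refine ⟨φ u', ht', ?_⟩
      have hxseq : xx = w' := by
        rw [hxseq2, ← hEq, ← add_smul, hsum1, one_smul]
      rw [hxseq]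
      exact hrecover'.symm
    have hQ1 : dotR w' w' ≤ dotR xx xx := hxxmax hw'SS
    have hQ2 : dotR w'' w'' ≤ dotR xx xx := hxxmax hw''SS
    have hQd : 0 < dotR (w' - w'') (w' - w'') := dotR_self_pos _ (sub_ne_zero.mpr hwne)
    rw [hsubexpand] at hQd
    have hexp : dotR xx xx = (φ u')*(φ u')*dotR w' w' + 2*(φ u')*(φ u'')*dotR w' w''
        + (φ u'')*(φ u'')*dotR w'' w'' := by
      rw [hxseq2]
      exact hdexpand _ _ _ _
    exact convex_key (φ u') (φ u'') (dotR w' w') (dotR w' w'') (dotR w'' w'')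
      (dotR xx xx) ht' ht'' hsum1 hexp hQd hQ1 hQ2
  -- final contradiction
  have hRHS : (∑ i, a i * ((dotR xx (V i) - |dotR xx (V i)|) / 2)
      + ∑ i, b i * ((dotR xx (V i) + |dotR xx (V i)|) / 2)) = ∑ i, κ i * dotR xx (V i) := by
    rw [← Finset.sum_add_distrib]
    refine Finset.sum_congr rfl fun i _ => ?_
    have hsi := hxxB.2.1 i
    by_cases h : 0 ≤ dotR p (V i)
    · have hd : 0 ≤ dotR xx (V i) := by
        simp only [hε, if_pos h, one_mul] at hsi
        exact hsi
      rw [abs_of_nonneg hd]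
      simp only [hκ, if_pos h]
      ring
    · have hd : dotR xx (V i) ≤ 0 := by
        simp only [hε, if_neg h, neg_one_mul] at hsi
        linarith
      rw [abs_of_nonpos hd]
      simp only [hκ, if_neg h]
      ring
  have hineq := hu xx hxsInd
  rw [hRHS] at hineq
  have hgle : g xx ≤ 0 := by
    simp only [hg]
    linarith
  rw [hgxx] at hgle
  linarith

end FarkasAux

/-- **Theorem 2.5**: Farkas' lemma over ℚ. -/
theorem farkas_rational {n m : ℕ} (v : Fin m → Fin n → ℚ) (a b : Fin m → ℚ)
    (hab : ∀ i, a i ≤ b i) (w : Fin n → ℚ) :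
    (∃ y : Fin m → ℚ, (∀ i, a i ≤ y i ∧ y i ≤ b i) ∧ w = ∑ i, y i • v i) ↔
      (w ∈ Submodule.span ℚ (Set.range v) ∧
        ∀ u : Fin n → ℝ, Indecomp (fun i => QtoR (v i)) u →
          dotR u (QtoR w) ≤
            ∑ i, (a i : ℝ) * ((dotR u (QtoR (v i)) - |dotR u (QtoR (v i))|) / 2) +
            ∑ i, (b i : ℝ) * ((dotR u (QtoR (v i)) + |dotR u (QtoR (v i))|) / 2)) := by
  constructor
  · rintro ⟨y, hy, rfl⟩
    constructor
    · exact Submodule.sum_mem _ fun i _ =>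
        Submodule.smul_mem _ _ (Submodule.subset_span ⟨i, rfl⟩)
    · intro u _
      rw [FarkasAux.castSum, FarkasAux.dotR_sum_smul_right, ← Finset.sum_add_distrib]
      apply Finset.sum_le_sum
      intro i _
      have hya : (a i : ℝ) ≤ (y i : ℝ) := by exact_mod_cast (hy i).1
      have hyb : (y i : ℝ) ≤ (b i : ℝ) := by exact_mod_cast (hy i).2
      set d := dotR u (QtoR (v i)) with hd
      rcases le_or_gt 0 d with h | h
      · rw [abs_of_nonneg h]
        have he : (a i : ℝ) * ((d - d)/2) + (b i : ℝ) * ((d + d)/2) = (b i : ℝ) * d := by ring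
        rw [he]
        exact mul_le_mul_of_nonneg_right hyb h
      · rw [abs_of_neg h]
        have he : (a i : ℝ) * ((d - -d)/2) + (b i : ℝ) * ((d + -d)/2) = (a i : ℝ) * d := by
          ring
        rw [he]
        nlinarith
  · rintro ⟨hw, hu⟩
    obtain ⟨cc, hcc⟩ := (Submodule.mem_span_range_iff_exists_fun ℚ).mp hw
    have hWspan : QtoR w ∈ Submodule.span ℝ (Set.range fun i => QtoR (v i)) := by
      rw [← hcc, FarkasAux.castSum]
      exact Submodule.sum_mem _ fun i _ =>
        Submodule.smul_mem _ _ (Submodule.subset_span ⟨i, rfl⟩)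
    have hab' : ∀ i, ((fun i => (a i : ℝ)) i) ≤ ((fun i => (b i : ℝ)) i) := fun i => by
      show (a i : ℝ) ≤ (b i : ℝ)
      exact_mod_cast hab i
    obtain ⟨yr, hyr, heq⟩ := FarkasAux.stepA (fun i => QtoR (v i))
      (fun i => (a i : ℝ)) (fun i => (b i : ℝ)) hab' (QtoR w) hWspan hu
    exact FarkasAux.stepB v a b hab w yr hyr heq
end
end

section
/- Let v_1,...,v_m ∈ ℤ^n. The following are equivalent: (1) the vectors v_1,...,v_m are Farkas-related; (2) whenever a vector w ∈ Σ_{i=1}^m ℤ v_i can be written as w = Σ_{i=1}^m x_i v_i with rational numbers 0 ≤ x_i < 1, then w = Σ_{i=1}^m y_i v_i for some y_1,...,y_m ∈ {0,1} such that y_i = 0 whenever x_i = 0; (3) whenever a vector w ∈ Σ_{i=1}^m ℤ v_i satisfies k·w = Σ_{i=1}^m a_i v_i for some natural number k and integers 0 ≤ a_i < k, then w = Σ_{i=1}^m y_i v_i for some y_1,...,y_m ∈ {0,1} such that y_i = 0 whenever a_i = 0. -/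
noncomputable section

/-- The embedding `ℤ^n ⊆ ℚ^n`. -/
def ZtoQ {n : ℕ} (x : Fin n → ℤ) : Fin n → ℚ := fun i => (x i : ℚ)

/-- The vectors `v₁,…,vₘ ∈ ℤ^n` are Farkas-related. -/
def FarkasRelated {n m : ℕ} (v : Fin m → Fin n → ℤ) : Prop :=
  ∀ a b : Fin m → ℤ, (∀ i, a i ≤ b i) →
    ∀ w : Fin n → ℤ, w ∈ Submodule.span ℤ (Set.range v) →
      (∃ x : Fin m → ℚ, (∀ i, (a i : ℚ) ≤ x i ∧ x i ≤ (b i : ℚ)) ∧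
        ZtoQ w = ∑ i, x i • ZtoQ (v i)) →
      ∃ y : Fin m → ℤ, (∀ i, a i ≤ y i ∧ y i ≤ b i) ∧ w = ∑ i, y i • v i

lemma ZtoQ_inj {n : ℕ} {w u : Fin n → ℤ} (h : ZtoQ w = ZtoQ u) : w = u := by
  funext j
  have := congrFun h j
  simp only [ZtoQ] at this
  exact_mod_cast this

lemma ZtoQ_sum_smul {n m : ℕ} (v : Fin m → Fin n → ℤ) (y : Fin m → ℤ) :
    ZtoQ (∑ i, y i • v i) = ∑ i, (y i : ℚ) • ZtoQ (v i) := by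
  funext j
  simp only [ZtoQ, Finset.sum_apply, Pi.smul_apply, smul_eq_mul]
  push_cast
  rfl

lemma ZtoQ_sub {n : ℕ} (w u : Fin n → ℤ) : ZtoQ (w - u) = ZtoQ w - ZtoQ u := by
  funext j
  simp only [ZtoQ, Pi.sub_apply]
  push_cast
  ring

lemma ZtoQ_zsmul {n : ℕ} (k : ℤ) (w : Fin n → ℤ) : ZtoQ (k • w) = (k : ℚ) • ZtoQ w := by
  funext j
  simp only [ZtoQ, Pi.smul_apply, smul_eq_mul]
  push_cast
  ring

/-- **Lemma 3.3**: three equivalent characterizations of Farkas-related vectors. -/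
theorem farkasRelated_characterizations {n m : ℕ} (v : Fin m → Fin n → ℤ) :
    (FarkasRelated v ↔
      (∀ w : Fin n → ℤ, w ∈ Submodule.span ℤ (Set.range v) →
        ∀ x : Fin m → ℚ, (∀ i, 0 ≤ x i ∧ x i < 1) →
          ZtoQ w = ∑ i, x i • ZtoQ (v i) →
          ∃ y : Fin m → ℤ, (∀ i, y i = 0 ∨ y i = 1) ∧ (∀ i, x i = 0 → y i = 0) ∧
            w = ∑ i, y i • v i)) ∧
    ((∀ w : Fin n → ℤ, w ∈ Submodule.span ℤ (Set.range v) →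
        ∀ x : Fin m → ℚ, (∀ i, 0 ≤ x i ∧ x i < 1) →
          ZtoQ w = ∑ i, x i • ZtoQ (v i) →
          ∃ y : Fin m → ℤ, (∀ i, y i = 0 ∨ y i = 1) ∧ (∀ i, x i = 0 → y i = 0) ∧
            w = ∑ i, y i • v i) ↔
      (∀ w : Fin n → ℤ, w ∈ Submodule.span ℤ (Set.range v) →
        ∀ (k : ℕ) (c : Fin m → ℤ), (∀ i, 0 ≤ c i ∧ c i < (k : ℤ)) →
          (k : ℤ) • w = ∑ i, c i • v i →
          ∃ y : Fin m → ℤ, (∀ i, y i = 0 ∨ y i = 1) ∧ (∀ i, c i = 0 → y i = 0) ∧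
            w = ∑ i, y i • v i)) := by
  constructor
  · constructor
    · -- (1) → (2)
      intro h w hw x hx hxw
      set b : Fin m → ℤ := fun i => if x i = 0 then 0 else 1 with hb
      obtain ⟨y, hy, hyw⟩ := h 0 b
        (by intro i; by_cases hxi : x i = 0 <;> simp [hb, hxi])
        w hw
        ⟨x, by
          intro i
          refine ⟨by simpa using (hx i).1, ?_⟩
          by_cases hxi : x i = 0
          · simp [hb, hxi]
          · simp only [hb, hxi, if_false]
            exact_mod_cast le_of_lt (hx i).2, hxw⟩
      refine ⟨y, ?_, ?_, hyw⟩
      · intro i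
        have := hy i
        by_cases hxi : x i = 0 <;> simp [hb, hxi] at this <;> omega
      · intro i hxi
        have := hy i
        simp [hb, hxi] at this
        omega
    · -- (2) → (1)
      intro h2 a b hab w hw ⟨x, hx, hxw⟩
      set z : Fin m → ℤ := fun i => ⌊x i⌋ with hz
      set u : Fin n → ℤ := ∑ i, z i • v i with hu
      have hu_mem : u ∈ Submodule.span ℤ (Set.range v) :=
        Submodule.sum_smul_mem _ z (fun i _ => Submodule.subset_span (Set.mem_range_self i))
      have hw' : w - u ∈ Submodule.span ℤ (Set.range v) := sub_mem hw hu_mem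
      have heq : ZtoQ (w - u) = ∑ i, (x i - (z i : ℚ)) • ZtoQ (v i) := by
        rw [ZtoQ_sub, hxw, hu, ZtoQ_sum_smul, ← Finset.sum_sub_distrib]
        congr 1
        funext i
        rw [sub_smul]
      obtain ⟨y', hy'01, hy'0, hy'w⟩ := h2 (w - u) hw' (fun i => x i - (z i : ℚ))
        (fun i => ⟨sub_nonneg.mpr (Int.floor_le (x i)),
          by rw [sub_lt_iff_lt_add, add_comm]; exact Int.lt_floor_add_one (x i)⟩)
        heq
      refine ⟨fun i => z i + y' i, ?_, ?_⟩
      · intro i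
        show a i ≤ z i + y' i ∧ z i + y' i ≤ b i
        constructor
        · have h1 : (a i : ℚ) ≤ x i := (hx i).1
          have h2 : a i ≤ z i := Int.le_floor.mpr h1
          rcases hy'01 i with h | h <;> omega
        · rcases hy'01 i with h | h
          · have : (z i : ℚ) ≤ (b i : ℚ) := le_trans (Int.floor_le (x i)) (hx i).2
            have : z i ≤ b i := by exact_mod_cast this
            omega
          · have hne : x i - (z i : ℚ) ≠ 0 := by
              intro hc
              rw [hy'0 i hc] at h
              omega
            have hlt : (z i : ℚ) < x i := by
              have := Int.floor_le (x i)
              rcases lt_or_eq_of_le this with h' | h'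
              · exact h'
              · exact absurd (by rw [← h']; ring) hne
            have : (z i : ℚ) < (b i : ℚ) := lt_of_lt_of_le hlt (hx i).2
            have : z i < b i := by exact_mod_cast this
            omega
      · have : w - u = ∑ i, y' i • v i := hy'w
        have : w = ∑ i, y' i • v i + ∑ i, z i • v i := by
          rw [← this, hu]; ring
        rw [this, ← Finset.sum_add_distrib]
        congr 1
        funext i
        rw [add_smul]
        ring
  · constructor
    · -- (2) → (3)
      intro h2 w hw k c hc hkw
      rcases Nat.eq_zero_or_pos k with hk | hk
      · cases isEmpty_or_nonempty (Fin m) with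
        | inr hne =>
          obtain ⟨i⟩ := hne
          have := hc i
          omega
        | inl he =>
          have : Set.range v = ∅ := Set.range_eq_empty v
          rw [this, Submodule.span_empty, Submodule.mem_bot] at hw
          exact ⟨0, fun i => Or.inl rfl, fun i _ => rfl, by simp [hw]⟩
      · have hk0 : (k : ℚ) ≠ 0 := by positivity
        have heq : ZtoQ w = ∑ i, ((c i : ℚ) / k) • ZtoQ (v i) := by
          have h1 : ZtoQ ((k : ℤ) • w) = ZtoQ (∑ i, c i • v i) := by rw [hkw]
          rw [ZtoQ_zsmul, ZtoQ_sum_smul] at h1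
          have h2 : ZtoQ w = (k : ℚ)⁻¹ • ∑ i, (c i : ℚ) • ZtoQ (v i) := by
            rw [← h1]
            push_cast
            rw [smul_smul, inv_mul_cancel₀ hk0, one_smul]
          rw [h2, Finset.smul_sum]
          congr 1
          funext i
          rw [smul_smul]
          congr 1
          field_simp
        obtain ⟨y, hy01, hy0, hyw⟩ := h2 w hw (fun i => (c i : ℚ) / k)
          (fun i => ⟨div_nonneg (by exact_mod_cast (hc i).1) (by positivity),
            (div_lt_one (by positivity)).mpr (by exact_mod_cast (hc i).2)⟩) heq
        refine ⟨y, hy01, fun i hci => hy0 i (by rw [hci]; simp), hyw⟩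
    · -- (3) → (2)
      intro h3 w hw x hx hxw
      set k : ℕ := ∏ j, (x j).den with hkdef
      have hkpos : 0 < k := Finset.prod_pos (fun j _ => (x j).pos)
      have hdvd : ∀ i, (x i).den ∣ k := fun i => Finset.dvd_prod_of_mem _ (Finset.mem_univ i)
      set c : Fin m → ℤ := fun i => (x i).num * ((k / (x i).den : ℕ) : ℤ) with hcdef
      have hc_eq : ∀ i, (c i : ℚ) = x i * k := by
        intro i
        have h1 : ((k / (x i).den : ℕ) : ℚ) = (k : ℚ) / ((x i).den : ℚ) :=
          Nat.cast_div (hdvd i) (by exact_mod_cast (x i).den_nz)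
        show (((x i).num * ((k / (x i).den : ℕ) : ℤ) : ℤ) : ℚ) = x i * k
        rw [Int.cast_mul, Int.cast_natCast, h1]
        conv_rhs => rw [← Rat.num_div_den (x i)]
        ring
      have hkQ : (0 : ℚ) < k := by exact_mod_cast hkpos
      have hcb : ∀ i, 0 ≤ c i ∧ c i < (k : ℤ) := by
        intro i
        constructor
        · have : (0 : ℚ) ≤ (c i : ℚ) := by rw [hc_eq i]; exact mul_nonneg (hx i).1 (le_of_lt hkQ)
          exact_mod_cast this
        · have : (c i : ℚ) < (k : ℚ) := by
            rw [hc_eq i]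
            calc x i * k < 1 * k := by exact mul_lt_mul_of_pos_right (hx i).2 hkQ
            _ = k := one_mul _
          exact_mod_cast this
      have hkw : (k : ℤ) • w = ∑ i, c i • v i := by
        apply ZtoQ_inj
        rw [ZtoQ_zsmul, ZtoQ_sum_smul, hxw, Finset.smul_sum]
        push_cast
        congr 1
        funext i
        rw [smul_smul, hc_eq i]
        ring_nf
      obtain ⟨y, hy01, hy0, hyw⟩ := h3 w hw k c hcb hkw
      refine ⟨y, hy01, fun i hxi => hy0 i ?_, hyw⟩
      have : (c i : ℚ) = 0 := by rw [hc_eq i, hxi]; ring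
      exact_mod_cast this
end
end

section
/- In the proof of the block-matrix construction: let A, B be n×m integer matrices, C an invertible m×m integer matrix, D an m×m integer matrix with at most one nonzero entry (equal to 1 or −1) in each row, and E = [[A, B], [CD, C]]. For a vector X = (Y, Z) ∈ ℚ^{2m} with Y, Z ∈ ℚ^m, one has EX = 0 if and only if (A − BD)Y = 0 and Z = −DY; moreover X is an elementary integral vector of the null space of E if and only if Y is an elementary integral vector of the null space of A − BD, and in that case the entries of X lie in {−1,0,1} if and only if the entries of Y lie in {−1,0,1}. -/
noncomputable section

/-- `x` is an elementary integral vector of the set `V ⊆ ℚ^ι`: a nonzero element of `V`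
whose support is minimal w.r.t. inclusion among supports of nonzero elements of `V`, and
whose coordinates are relatively prime integers. -/
def IsElemIntVec {ι : Type*} [Fintype ι] (V : Set (ι → ℚ)) (x : ι → ℚ) : Prop :=
  x ∈ V ∧ x ≠ 0 ∧
    (∀ y ∈ V, y ≠ 0 → {i | y i ≠ 0} ⊆ {i | x i ≠ 0} → {i | y i ≠ 0} = {i | x i ≠ 0}) ∧
    ∃ c : ι → ℤ, (∀ i, (c i : ℚ) = x i) ∧ Finset.univ.gcd c = 1

/-- The block matrix `E = [[A, B], [CD, C]]`, over `ℚ`. -/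
def blockE {n m : ℕ} (A B : Matrix (Fin n) (Fin m) ℤ) (C D : Matrix (Fin m) (Fin m) ℤ) :
    Matrix (Fin n ⊕ Fin m) (Fin m ⊕ Fin m) ℚ :=
  (Matrix.fromBlocks A B (C * D) C).map fun z : ℤ => (z : ℚ)

/-- The matrix `A - BD`, over `ℚ`. -/
def redM {n m : ℕ} (A B : Matrix (Fin n) (Fin m) ℤ) (D : Matrix (Fin m) (Fin m) ℤ) :
    Matrix (Fin n) (Fin m) ℚ :=
  (A - B * D).map fun z : ℤ => (z : ℚ)

/-! Since `C` is invertible, `E (Y, Z) = 0` forces `Z = -DY`, so the null space of `E` is the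
graph of `Y ↦ -DY` over the null space of `A - BD`. As every row of `D` is zero or `±eⱼ`, every
coordinate of `-DY` is `0` or `±Yⱼ`. Hence the supports of two graph vectors compare exactly as
the supports of their `Y`-parts, entries in `{-1, 0, 1}` stay there, and the graph of an integer
vector `c` is an integer vector with the same gcd (the last point holds for any integer `D`). -/

open Matrix Function

section SignedSelection

variable {ι κ : Type*}

def IsSignedSelection (D : Matrix κ ι ℤ) : Prop :=
  ∀ i, (∀ j, D i j = 0) ∨ ∃ j, (D i j = 1 ∨ D i j = -1) ∧ ∀ k, k ≠ j → D i k = 0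

variable [Fintype ι] {D : Matrix κ ι ℤ}

theorem cast_mulVec_apply (D : Matrix κ ι ℤ) (c : ι → ℤ) (i : κ) :
    (((D *ᵥ c) i : ℤ) : ℚ) = (D.map ((↑) : ℤ → ℚ) *ᵥ fun j => (c j : ℚ)) i :=
  RingHom.map_mulVec (Int.castRingHom ℚ) D c i

theorem IsSignedSelection.mulVec_apply_cases (hD : IsSignedSelection D) (i : κ) :
    (∀ y : ι → ℚ, (D.map ((↑) : ℤ → ℚ) *ᵥ y) i = 0) ∨
      ∃ j, (∀ y : ι → ℚ, (D.map ((↑) : ℤ → ℚ) *ᵥ y) i = y j) ∨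
        ∀ y : ι → ℚ, (D.map ((↑) : ℤ → ℚ) *ᵥ y) i = -y j := by
  rcases hD i with hzero | ⟨j, hj, hk⟩
  · left
    intro y
    simp [mulVec, dotProduct, hzero]
  · have hsingle (y : ι → ℚ) : (D.map ((↑) : ℤ → ℚ) *ᵥ y) i = D i j * y j :=
      Finset.sum_eq_single j (fun k _ hkj => by simp [hk k hkj]) (by simp)
    right
    exact ⟨j, hj.imp (fun h y => by simp [hsingle, h]) fun h y => by simp [hsingle, h]⟩

theorem IsSignedSelection.support_mulVec_subset (hD : IsSignedSelection D) {y y' : ι → ℚ}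
    (h : support y ⊆ support y') :
    support (D.map ((↑) : ℤ → ℚ) *ᵥ y) ⊆ support (D.map ((↑) : ℤ → ℚ) *ᵥ y') := by
  intro i hi
  rcases hD.mulVec_apply_cases i with hzero | ⟨j, hsel | hsel⟩
  · exact absurd (hzero y) hi
  · simp only [mem_support, hsel] at hi ⊢
    exact h hi
  · simp only [mem_support, hsel, neg_ne_zero] at hi ⊢
    exact h hi

theorem IsSignedSelection.mulVec_apply_mem (hD : IsSignedSelection D) {S : Set ℚ}
    (hS₀ : 0 ∈ S) (hS_neg : ∀ a ∈ S, -a ∈ S) {y : ι → ℚ} (hy : ∀ j, y j ∈ S) (i : κ) :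
    (D.map ((↑) : ℤ → ℚ) *ᵥ y) i ∈ S := by
  rcases hD.mulVec_apply_cases i with hzero | ⟨j, hsel | hsel⟩
  · exact hzero y ▸ hS₀
  · exact hsel y ▸ hy j
  · exact hsel y ▸ hS_neg _ (hy j)

theorem IsSignedSelection.support_sum_elim_neg_mulVec_subset_iff (hD : IsSignedSelection D)
    {y y' : ι → ℚ} :
    support (Sum.elim y (-(D.map ((↑) : ℤ → ℚ) *ᵥ y))) ⊆
        support (Sum.elim y' (-(D.map ((↑) : ℤ → ℚ) *ᵥ y'))) ↔
      support y ⊆ support y' := by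
  refine ⟨fun h j hj => h (a := Sum.inl j) hj, ?_⟩
  rintro h (j | i) hi
  · exact h hi
  · simpa using hD.support_mulVec_subset h (by simpa using hi)

end SignedSelection

section Graph

variable {ι κ : Type*} [Fintype ι] [Fintype κ] {D : Matrix κ ι ℤ}

def graphNegMulVec (D : Matrix κ ι ℤ) (V : Set (ι → ℚ)) : Set (ι ⊕ κ → ℚ) :=
  {x | x ∘ Sum.inl ∈ V ∧ x ∘ Sum.inr = -(D.map ((↑) : ℤ → ℚ) *ᵥ (x ∘ Sum.inl))}

def IsPrimitiveIntVec (x : ι → ℚ) : Prop :=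
  ∃ c : ι → ℤ, (∀ i, (c i : ℚ) = x i) ∧ Finset.univ.gcd c = 1

theorem gcd_sum_elim_neg_mulVec (D : Matrix κ ι ℤ) (c : ι → ℤ) :
    Finset.univ.gcd (Sum.elim c (-(D *ᵥ c))) = Finset.univ.gcd c := by
  refine dvd_antisymm_of_normalize_eq Finset.normalize_gcd Finset.normalize_gcd
    (Finset.dvd_gcd fun j _ => Finset.gcd_dvd (Finset.mem_univ (Sum.inl j)))
    (Finset.dvd_gcd ?_)
  rintro (j | i) -
  · exact Finset.gcd_dvd (Finset.mem_univ j)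
  · exact (dvd_neg.2 <| Finset.dvd_sum fun j _ =>
      dvd_mul_of_dvd_right (Finset.gcd_dvd (Finset.mem_univ j)) _)

theorem isPrimitiveIntVec_sum_elim_neg_mulVec_iff (D : Matrix κ ι ℤ) (y : ι → ℚ) :
    IsPrimitiveIntVec (Sum.elim y (-(D.map ((↑) : ℤ → ℚ) *ᵥ y))) ↔ IsPrimitiveIntVec y := by
  constructor
  · rintro ⟨c, hc, hgcd⟩
    have hy : y = fun j => (c (Sum.inl j) : ℚ) := funext fun j => (hc (Sum.inl j)).symm
    have hc_graph : c = Sum.elim (c ∘ Sum.inl) (-(D *ᵥ (c ∘ Sum.inl))) := by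
      ext (j | i)
      · rfl
      · have := hc (Sum.inr i)
        rw [hy] at this
        exact_mod_cast this.trans (congrArg Neg.neg (cast_mulVec_apply D _ i).symm)
    refine ⟨c ∘ Sum.inl, fun j => hc (Sum.inl j), ?_⟩
    rwa [hc_graph, gcd_sum_elim_neg_mulVec] at hgcd
  · rintro ⟨c, hc, hgcd⟩
    obtain rfl : y = fun j => (c j : ℚ) := funext fun j => (hc j).symm
    refine ⟨Sum.elim c (-(D *ᵥ c)), ?_, by rw [gcd_sum_elim_neg_mulVec, hgcd]⟩
    rintro (j | i)
    · rfl
    · simp [cast_mulVec_apply]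

theorem IsSignedSelection.isElemIntVec_graphNegMulVec_iff (hD : IsSignedSelection D)
    (V : Set (ι → ℚ)) (y : ι → ℚ) :
    IsElemIntVec (graphNegMulVec D V) (Sum.elim y (-(D.map ((↑) : ℤ → ℚ) *ᵥ y))) ↔
      IsElemIntVec V y := by
  set graph : (ι → ℚ) → (ι ⊕ κ → ℚ) := fun y => Sum.elim y (-(D.map ((↑) : ℤ → ℚ) *ᵥ y))
  have hgraph_eq_zero {y : ι → ℚ} : graph y = 0 ↔ y = 0 := by
    simp only [graph, ← Sum.elim_zero_zero, Sum.elim_eq_iff]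
    exact ⟨And.left, fun h => ⟨h, by simp [h]⟩⟩
  have hmin : (∀ x ∈ graphNegMulVec D V, x ≠ 0 →
        support x ⊆ support (graph y) → support x = support (graph y)) ↔
      ∀ y' ∈ V, y' ≠ 0 → support y' ⊆ support y → support y' = support y := by
    constructor
    · intro h y' hy' hne hsub
      have := h (graph y') ⟨hy', rfl⟩ (hgraph_eq_zero.not.2 hne)
        (hD.support_sum_elim_neg_mulVec_subset_iff.2 hsub)
      exact hsub.antisymm (hD.support_sum_elim_neg_mulVec_subset_iff.1 this.ge)
    · rintro h x ⟨hxV, hx⟩ hne hsub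
      obtain ⟨y', rfl⟩ : ∃ y', x = graph y' :=
        ⟨x ∘ Sum.inl, by simp only [graph, ← hx, Sum.elim_comp_inl_inr]⟩
      have := h y' hxV (hgraph_eq_zero.not.1 hne)
        (hD.support_sum_elim_neg_mulVec_subset_iff.1 hsub)
      exact hsub.antisymm (hD.support_sum_elim_neg_mulVec_subset_iff.2 this.ge)
  exact and_congr (by simp [graphNegMulVec]) (and_congr hgraph_eq_zero.not
    (and_congr hmin (isPrimitiveIntVec_sum_elim_neg_mulVec_iff D y)))

end Graph

section BlockMatrix

variable {n m : ℕ} (A B : Matrix (Fin n) (Fin m) ℤ) (C D : Matrix (Fin m) (Fin m) ℤ)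

theorem blockE_mulVec_sum_elim (Y Z : Fin m → ℚ) :
    blockE A B C D *ᵥ Sum.elim Y Z =
      Sum.elim (A.map ((↑) : ℤ → ℚ) *ᵥ Y + B.map ((↑) : ℤ → ℚ) *ᵥ Z)
        (C.map ((↑) : ℤ → ℚ) *ᵥ (D.map ((↑) : ℤ → ℚ) *ᵥ Y + Z)) := by
  have hCD : (C * D).map ((↑) : ℤ → ℚ) = C.map (↑) * D.map (↑) :=
    Matrix.map_mul (f := Int.castRingHom ℚ)
  rw [blockE, fromBlocks_map, fromBlocks_mulVec, Sum.elim_comp_inl, Sum.elim_comp_inr, hCD,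
    mulVec_add, mulVec_mulVec]

theorem redM_mulVec (Y : Fin m → ℚ) :
    redM A B D *ᵥ Y =
      A.map ((↑) : ℤ → ℚ) *ᵥ Y - B.map ((↑) : ℤ → ℚ) *ᵥ (D.map ((↑) : ℤ → ℚ) *ᵥ Y) := by
  have hBD : (B * D).map ((↑) : ℤ → ℚ) = B.map (↑) * D.map (↑) :=
    Matrix.map_mul (f := Int.castRingHom ℚ)
  rw [redM, Matrix.map_sub _ (fun a b => Int.cast_sub a b), hBD, sub_mulVec, mulVec_mulVec]
  rfl

variable {C}

theorem blockE_mulVec_eq_zero_iff (hC : IsUnit C.det) (Y Z : Fin m → ℚ) :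
    blockE A B C D *ᵥ Sum.elim Y Z = 0 ↔
      redM A B D *ᵥ Y = 0 ∧ Z = -(D.map ((↑) : ℤ → ℚ) *ᵥ Y) := by
  have hC' : Injective (C.map ((↑) : ℤ → ℚ)).mulVec :=
    mulVec_injective_iff_isUnit.2 <|
      ((isUnit_iff_isUnit_det C).2 hC).map (Int.castRingHom ℚ).mapMatrix
  rw [blockE_mulVec_sum_elim, ← Sum.elim_zero_zero, Sum.elim_eq_iff, hC'.eq_iff' (mulVec_zero _),
    add_eq_zero_iff_eq_neg' (b := Z)]
  refine and_congr_left fun hZ => ?_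
  rw [hZ, redM_mulVec, mulVec_neg, sub_eq_add_neg]

theorem setOf_blockE_mulVec_eq_zero (hC : IsUnit C.det) :
    {x | blockE A B C D *ᵥ x = 0} = graphNegMulVec D {y | redM A B D *ᵥ y = 0} := by
  ext x
  rw [← Sum.elim_comp_inl_inr x]
  exact blockE_mulVec_eq_zero_iff A B D hC _ _

end BlockMatrix

/-- The computations in the proof of Proposition 3.6: for `X = (Y, Z) ∈ ℚ^{2m}`,
`EX = 0` iff `(A - BD)Y = 0` and `Z = -DY`; moreover (given `EX = 0`) `X` is an
elementary integral vector of the null space of `E` iff `Y` is an elementary integral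
vector of the null space of `A - BD`, and in that case the entries of `X` lie in
`{-1,0,1}` iff the entries of `Y` do. -/
theorem blockE_nullspace {n m : ℕ} (A B : Matrix (Fin n) (Fin m) ℤ)
    (C D : Matrix (Fin m) (Fin m) ℤ) (hC : IsUnit C.det)
    (hD : ∀ i : Fin m, (∀ j, D i j = 0) ∨
      ∃ j, (D i j = 1 ∨ D i j = -1) ∧ ∀ k, k ≠ j → D i k = 0)
    (Y Z : Fin m → ℚ) :
    ((blockE A B C D).mulVec (Sum.elim Y Z) = 0 ↔
      ((redM A B D).mulVec Y = 0 ∧ Z = -((D.map fun z : ℤ => (z : ℚ)).mulVec Y))) ∧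
    ((blockE A B C D).mulVec (Sum.elim Y Z) = 0 →
      (IsElemIntVec {x | (blockE A B C D).mulVec x = 0} (Sum.elim Y Z) ↔
        IsElemIntVec {y | (redM A B D).mulVec y = 0} Y)) ∧
    (IsElemIntVec {x | (blockE A B C D).mulVec x = 0} (Sum.elim Y Z) →
      ((∀ k, Sum.elim Y Z k = -1 ∨ Sum.elim Y Z k = 0 ∨ Sum.elim Y Z k = 1) ↔
        (∀ j, Y j = -1 ∨ Y j = 0 ∨ Y j = 1))) := by
  have hD : IsSignedSelection D := hD
  have hnull := blockE_mulVec_eq_zero_iff A B D hC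
  refine ⟨hnull Y Z, fun hX => ?_, fun hX => ?_⟩
  · obtain ⟨-, rfl⟩ := (hnull Y Z).1 hX
    rw [setOf_blockE_mulVec_eq_zero A B D hC]
    exact hD.isElemIntVec_graphNegMulVec_iff _ Y
  · obtain ⟨-, rfl⟩ := (hnull Y Z).1 hX.1
    have hS_neg : ∀ a ∈ ({-1, 0, 1} : Set ℚ), -a ∈ ({-1, 0, 1} : Set ℚ) := by
      rintro a (rfl | rfl | rfl) <;> norm_num
    show (∀ k, Sum.elim Y _ k ∈ ({-1, 0, 1} : Set ℚ)) ↔ ∀ j, Y j ∈ ({-1, 0, 1} : Set ℚ)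
    rw [Sum.forall]
    exact and_iff_left_of_imp fun hY i =>
      hS_neg _ (hD.mulVec_apply_mem (by simp) hS_neg hY i)
end
end

section
/- Let G be a connected bipartite simple graph with vertex set {1,...,n} and bipartition ({1,...,r},{r+1,...,n}). Let s_1,...,s_n and a_e ≤ b_e (for e ∈ E(G)) be integers. Then there exist integers x_e with a_e ≤ x_e ≤ b_e (for e ∈ E(G)) such that Σ_{i=1}^n s_i f_i = Σ_{e∈E(G)} x_e v(e), if and only if: (1) s_1 + ⋯ + s_r = s_{r+1} + ⋯ + s_n; and (2) for all sets I ⊆ {1,...,r} and J ⊆ {r+1,...,n} such that the induced subgraph of G on I ∪ J and the induced subgraph of G on ({1,...,r}\I) ∪ ({r+1,...,n}\J) are connected, one has Σ_{i∈I} s_i − Σ_{j∈J} s_j ≤ Σ_{e=ij, i∈I, j∉J} b_e − Σ_{e=ij, i∉I, j∈J} a_e, where the sums on the right run over edges e = ij of G with i ∈ {1,...,r} and j ∈ {r+1,...,n}. -/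
/-!
Orient every edge from the side `{i | i < r}` to the other side and replace `s` by the demand
`t`, equal to `s` on the first side and to `-s` on the second. Then the solutions `x` are exactly
the integral flows with net outflow `t` and `a ≤ x ≤ b`, and conditions (1) and (2) say that
`∑ t = 0` and that Hoffman's cut condition `t(S) ≤ b(δ⁺S) - a(δ⁻S)` holds for every `S` such that
`S` and `Sᶜ` induce connected subgraphs.

Hoffman's theorem is proved by induction on `∑ (b - a)`: if an edge with `a < b` leaves a tight
cut, raise its lower bound, otherwise lower its upper bound. Submodularity of the cut function
(uncrossing) shows that the cut conditions survive. Restricting to connected cuts loses nothing: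
the cut function is additive when `S`, or `Sᶜ`, splits into two parts with no edges between them,
and since `G` is connected each part of `Sᶜ` together with `S` is again connected.
-/

open scoped Classical

noncomputable section

/-- The column `v(e) = f_i + f_j` (over ℤ) of the incidence matrix corresponding to an
edge `e = ij`. -/
def edgeVecZ {n : ℕ} (e : Sym2 (Fin n)) : Fin n → ℤ := fun k => if k ∈ e then 1 else 0

open Finset

namespace SimpleGraph

variable {V : Type*} {G : SimpleGraph V}

lemma exists_partition_of_not_connected_induce [DecidableEq V] {S : Finset V}
    (hne : S.Nonempty) (h : ¬(G.induce (S : Set V)).Connected) :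
    ∃ C D : Finset V, C.Nonempty ∧ D.Nonempty ∧ Disjoint C D ∧ C ∪ D = S ∧
      ∀ c ∈ C, ∀ d ∈ D, ¬G.Adj c d := by
  have : Nonempty (S : Set V) := hne.coe_sort
  obtain ⟨x, y, hxy⟩ : ∃ x y, ¬(G.induce (S : Set V)).Reachable x y := by
    simpa [connected_iff, Preconnected] using h
  let R : V → Prop := fun z => ∃ hz : z ∈ S, (G.induce (S : Set V)).Reachable x ⟨z, hz⟩
  refine ⟨S.filter R, S.filter (¬R ·), ⟨x, mem_filter.2 ⟨x.2, x.2, .rfl⟩⟩,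
    ⟨y, mem_filter.2 ⟨y.2, fun ⟨_, hy⟩ => hxy hy⟩⟩, disjoint_filter_filter_not _ _ _,
    filter_union_filter_not_eq _ _, fun c hc d hd hcd => ?_⟩
  obtain ⟨-, hcS, hxc⟩ := mem_filter.1 hc
  obtain ⟨hdS, hxd⟩ := mem_filter.1 hd
  exact hxd ⟨hdS, hxc.trans (Adj.reachable (G := G.induce (S : Set V)) hcd)⟩

lemma Walk.exists_walk_support_subset_union {S W : Set V}
    (hW : ∀ w ∈ W, ∀ y ∉ S, G.Adj w y → y ∈ W) {w z : V} (p : G.Walk w z) (hz : z ∈ S)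
    (hw : w ∈ S ∪ W) :
    ∃ z' ∈ S, ∃ q : G.Walk w z', ∀ y ∈ q.support, y ∈ S ∪ W := by
  induction p with
  | nil => exact ⟨_, hz, .nil, by simpa using hw⟩
  | @cons w y _ hwy p ih =>
    by_cases hwS : w ∈ S
    · exact ⟨w, hwS, .nil, by simpa using hw⟩
    have hy : y ∈ S ∪ W := (em (y ∈ S)).imp id (hW w (hw.resolve_left hwS) y · hwy)
    obtain ⟨z', hz', q, hq⟩ := ih hz hy
    exact ⟨z', hz', .cons hwy q,
      by simpa only [Walk.support_cons, List.forall_mem_cons] using ⟨hw, hq⟩⟩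

lemma Connected.induce_union_of_forall_adj (hG : G.Connected) {S W : Set V}
    (hS : (G.induce S).Connected) (hW : ∀ w ∈ W, ∀ y ∉ S, G.Adj w y → y ∈ W) :
    (G.induce (S ∪ W)).Connected := by
  obtain ⟨s₀, hs₀⟩ := hS.nonempty
  refine induce_connected_of_patches s₀ (Or.inl hs₀) fun {w} hw => ?_
  rcases hw with hwS | hwW
  · exact ⟨S, Set.subset_union_left, hs₀, hwS, hS.preconnected _ _⟩
  obtain ⟨z, hz, q, hq⟩ :=
    (hG.preconnected w s₀).some.exists_walk_support_subset_union hW hs₀ (Or.inr hwW)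
  refine ⟨S ∪ {y | y ∈ q.support}, Set.union_subset Set.subset_union_left hq, Or.inl hs₀,
    Or.inr q.start_mem_support, ?_⟩
  exact (induce_union_connected hS.preconnected q.connected_induce_support.preconnected
    ⟨z, hz, q.end_mem_support⟩).preconnected _ _

end SimpleGraph

section Flow

variable {V E : Type*} [DecidableEq V] [Fintype E] (u v : E → V)

def netOutflow (x : E → ℤ) (k : V) : ℤ :=
  ∑ e with u e = k, x e - ∑ e with v e = k, x e

def cutCapacity (a b : E → ℤ) (S : Finset V) : ℤ :=
  ∑ e, ((if u e ∈ S ∧ v e ∉ S then b e else 0) - if u e ∉ S ∧ v e ∈ S then a e else 0)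

variable {u v}

@[simp]
lemma cutCapacity_empty (a b : E → ℤ) : cutCapacity u v a b ∅ = 0 := by
  simp [cutCapacity]

@[simp]
lemma cutCapacity_univ [Fintype V] (a b : E → ℤ) : cutCapacity u v a b univ = 0 := by
  simp [cutCapacity]

lemma cutCapacity_mono {a a' b b' : E → ℤ} (ha : ∀ e, a' e ≤ a e) (hb : ∀ e, b e ≤ b' e)
    (S : Finset V) : cutCapacity u v a b S ≤ cutCapacity u v a' b' S :=
  sum_le_sum fun e _ => by split_ifs <;> linarith [ha e, hb e]

lemma cutCapacity_add_cutCapacity (a b : E → ℤ) (X Y : Finset V) :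
    cutCapacity u v a b X + cutCapacity u v a b Y =
      cutCapacity u v a b (X ∪ Y) + cutCapacity u v a b (X ∩ Y) +
        ∑ e with (u e ∈ X \ Y ∧ v e ∈ Y \ X) ∨ (u e ∈ Y \ X ∧ v e ∈ X \ Y), (b e - a e) := by
  simp only [cutCapacity, ← sum_add_distrib, sum_filter]
  refine sum_congr rfl fun e _ => ?_
  by_cases h1 : u e ∈ X <;> by_cases h2 : u e ∈ Y <;> by_cases h3 : v e ∈ X <;>
    by_cases h4 : v e ∈ Y <;> simp [h1, h2, h3, h4] <;> ring

lemma cutCapacity_update (a b : E → ℤ) (e₀ : E) (a₀ b₀ : ℤ) (S : Finset V) :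
    cutCapacity u v (Function.update a e₀ a₀) (Function.update b e₀ b₀) S =
      cutCapacity u v a b S + (if u e₀ ∈ S ∧ v e₀ ∉ S then b₀ - b e₀ else 0) -
        if u e₀ ∉ S ∧ v e₀ ∈ S then a₀ - a e₀ else 0 := by
  simp only [cutCapacity]
  rw [← add_sum_erase _ _ (mem_univ e₀), ← add_sum_erase _ _ (mem_univ e₀),
    sum_congr rfl fun e he => by
      rw [Function.update_of_ne (ne_of_mem_erase he), Function.update_of_ne (ne_of_mem_erase he)]]
  simp only [Function.update_self]
  split_ifs <;> ring

lemma sum_netOutflow_eq_cutCapacity (x : E → ℤ) (S : Finset V) :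
    ∑ k ∈ S, netOutflow u v x k = cutCapacity u v x x S := by
  simp only [netOutflow, sum_sub_distrib, sum_filter]
  rw [sum_comm, sum_comm (s := S)]
  simp only [sum_ite_eq, cutCapacity, ← sum_sub_distrib]
  refine sum_congr rfl fun e _ => ?_
  split_ifs <;> simp_all

lemma sum_netOutflow [Fintype V] (x : E → ℤ) : ∑ k, netOutflow u v x k = 0 := by
  rw [sum_netOutflow_eq_cutCapacity, cutCapacity_univ]

end Flow

section Hoffman

variable {V E : Type*} [DecidableEq V] [Fintype E] {u v : E → V} {t : V → ℤ}

lemma netOutflow_eq_of_le_cutCapacity [Fintype V] {a : E → ℤ} (ht : ∑ i, t i = 0)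
    (hcut : ∀ S, ∑ i ∈ S, t i ≤ cutCapacity u v a a S) (k : V) : netOutflow u v a k = t k := by
  have hk := hcut {k}
  have hkc := hcut {k}ᶜ
  have hcap := cutCapacity_add_cutCapacity (u := u) (v := v) a a {k} {k}ᶜ
  simp only [union_compl, inter_compl, cutCapacity_univ, cutCapacity_empty, sub_self,
    sum_const_zero, add_zero] at hcap
  have hsum : ∑ i ∈ {k}, t i + ∑ i ∈ {k}ᶜ, t i = 0 := by rw [sum_add_sum_compl, ht]
  rw [sum_singleton] at hk hsum
  rw [← sum_singleton (netOutflow u v a) k, sum_netOutflow_eq_cutCapacity]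
  linarith

lemma lt_cutCapacity_of_tight {a b : E → ℤ} (hab : ∀ e, a e ≤ b e)
    (hcut : ∀ S, ∑ i ∈ S, t i ≤ cutCapacity u v a b S) {e₀ : E} (he₀ : a e₀ < b e₀)
    {S T : Finset V} (hS : u e₀ ∈ S ∧ v e₀ ∉ S)
    (hS_tight : cutCapacity u v a b S = ∑ i ∈ S, t i) (hT : u e₀ ∉ T ∧ v e₀ ∈ T) :
    ∑ i ∈ T, t i < cutCapacity u v a b T := by
  have hcap := cutCapacity_add_cutCapacity (u := u) (v := v) a b S T
  have hcross : b e₀ - a e₀ ≤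
      ∑ e with (u e ∈ S \ T ∧ v e ∈ T \ S) ∨ (u e ∈ T \ S ∧ v e ∈ S \ T), (b e - a e) :=
    single_le_sum (fun e _ => sub_nonneg.2 (hab e))
      (mem_filter.2 ⟨mem_univ _, Or.inl ⟨mem_sdiff.2 ⟨hS.1, hT.1⟩, mem_sdiff.2 ⟨hT.2, hS.2⟩⟩⟩)
  have := hcut (S ∪ T)
  have := hcut (S ∩ T)
  have := sum_union_inter (s₁ := S) (s₂ := T) (f := t)
  linarith

lemma exists_tighter_bounds {a b : E → ℤ} (hab : ∀ e, a e ≤ b e)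
    (hcut : ∀ S, ∑ i ∈ S, t i ≤ cutCapacity u v a b S) {e₀ : E} (he₀ : a e₀ < b e₀) :
    ∃ a' b' : E → ℤ, (∀ e, a e ≤ a' e ∧ a' e ≤ b' e ∧ b' e ≤ b e) ∧
      (a e₀ < a' e₀ ∨ b' e₀ < b e₀) ∧ ∀ S, ∑ i ∈ S, t i ≤ cutCapacity u v a' b' S := by
  by_cases htight : ∃ S, u e₀ ∈ S ∧ v e₀ ∉ S ∧ cutCapacity u v a b S = ∑ i ∈ S, t i
  · obtain ⟨S, hSu, hSv, hS⟩ := htight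
    refine ⟨Function.update a e₀ (a e₀ + 1), b, fun e => ?_, Or.inl (by simp), fun T => ?_⟩
    · rcases eq_or_ne e e₀ with rfl | he
      · simpa using he₀
      · simpa [he] using hab e
    · have := cutCapacity_update (u := u) (v := v) a b e₀ (a e₀ + 1) (b e₀) T
      simp only [Function.update_eq_self, sub_self, ite_self, add_zero, add_sub_cancel_left]
        at this
      rw [this]
      split_ifs with hT
      · linarith [lt_cutCapacity_of_tight hab hcut he₀ ⟨hSu, hSv⟩ hS hT]
      · linarith [hcut T]
  · push Not at htight
    refine ⟨a, Function.update b e₀ (b e₀ - 1), fun e => ?_, Or.inr (by simp), fun T => ?_⟩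
    · rcases eq_or_ne e e₀ with rfl | he
      · simp only [Function.update_self]; omega
      · simpa [he] using hab e
    · have := cutCapacity_update (u := u) (v := v) a b e₀ (a e₀) (b e₀ - 1) T
      simp only [Function.update_eq_self, sub_self, ite_self, sub_zero, sub_sub_cancel_left]
        at this
      rw [this]
      split_ifs with hT
      · have := htight T hT.1 hT.2
        have := hcut T
        omega
      · linarith [hcut T]

/-- Hoffman's circulation theorem, integral version. -/
theorem exists_flow_iff_le_cutCapacity [Fintype V] {a b : E → ℤ} (hab : ∀ e, a e ≤ b e) :
    (∃ x : E → ℤ, (∀ e, a e ≤ x e ∧ x e ≤ b e) ∧ ∀ k, netOutflow u v x k = t k) ↔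
      ∑ i, t i = 0 ∧ ∀ S, ∑ i ∈ S, t i ≤ cutCapacity u v a b S := by
  constructor
  · rintro ⟨x, hx, hflow⟩
    simp only [← hflow]
    refine ⟨sum_netOutflow x, fun S => ?_⟩
    rw [sum_netOutflow_eq_cutCapacity]
    exact cutCapacity_mono (fun e => (hx e).1) (fun e => (hx e).2) S
  · rintro ⟨ht, hcut⟩
    induction hN : ∑ e, (b e - a e).toNat using Nat.strong_induction_on generalizing a b with
    | _ N ih =>
    by_cases hall : ∀ e, a e = b e
    · obtain rfl : a = b := funext hall
      exact ⟨a, fun e => ⟨le_rfl, le_rfl⟩, netOutflow_eq_of_le_cutCapacity ht hcut⟩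
    obtain ⟨e₀, he₀⟩ := not_forall.1 hall
    obtain ⟨a', b', hbounds, hstep, hcut'⟩ :=
      exists_tighter_bounds hab hcut (lt_of_le_of_ne (hab e₀) he₀)
    have hlt : ∑ e, (b' e - a' e).toNat < N := hN ▸ sum_lt_sum
      (fun e _ => by have := hbounds e; omega) ⟨e₀, mem_univ _, by have := hbounds e₀; omega⟩
    obtain ⟨x, hx, hflow⟩ := ih _ hlt (fun e => (hbounds e).2.1) hcut' rfl
    exact ⟨x, fun e => ⟨(hbounds e).1.trans (hx e).1, (hx e).2.trans (hbounds e).2.2⟩, hflow⟩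

end Hoffman

section Reduction

variable {V E : Type*} [DecidableEq V] [Fintype E] {G : SimpleGraph V}
  {u v : E → V} {t : V → ℤ} {a b : E → ℤ}

lemma cutCapacity_add_cutCapacity_of_not_adj (hadj : ∀ e, G.Adj (u e) (v e)) {X Y : Finset V}
    (hXY : ∀ x ∈ X \ Y, ∀ y ∈ Y \ X, ¬G.Adj x y) :
    cutCapacity u v a b X + cutCapacity u v a b Y =
      cutCapacity u v a b (X ∪ Y) + cutCapacity u v a b (X ∩ Y) := by
  rw [cutCapacity_add_cutCapacity, add_eq_left]
  refine sum_eq_zero fun e he => ?_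
  rcases (mem_filter.1 he).2 with ⟨hu, hv⟩ | ⟨hu, hv⟩
  · exact absurd (hadj e) (hXY _ hu _ hv)
  · exact absurd (hadj e).symm (hXY _ hv _ hu)

lemma le_cutCapacity_of_connected_induce [Fintype V] (hG : G.Connected)
    (hadj : ∀ e, G.Adj (u e) (v e)) (ht : ∑ i, t i = 0)
    (hcut : ∀ S : Finset V, (G.induce (S : Set V)).Connected →
      (G.induce (Sᶜ : Finset V)).Connected → ∑ i ∈ S, t i ≤ cutCapacity u v a b S)
    (S : Finset V) (hS : (G.induce (S : Set V)).Connected) :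
    ∑ i ∈ S, t i ≤ cutCapacity u v a b S := by
  induction hN : #Sᶜ using Nat.strong_induction_on generalizing S with
  | _ N ih =>
  rcases Sᶜ.eq_empty_or_nonempty with hSc | hSc
  · rw [compl_eq_empty_iff] at hSc
    simp [hSc, ht]
  by_cases hSc_conn : (G.induce (Sᶜ : Finset V)).Connected
  · exact hcut S hS hSc_conn
  obtain ⟨C, D, hC, hD, hCD, hCDS, hnadj⟩ :=
    G.exists_partition_of_not_connected_induce hSc hSc_conn
  have hmem : ∀ x, x ∉ S ↔ x ∈ C ∨ x ∈ D := fun x => by rw [← mem_compl, ← hCDS, mem_union]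
  have hdisj := disjoint_left.1 hCD
  have hcard := card_union_of_disjoint hCD
  rw [hCDS] at hcard
  have hSC : (S ∪ C)ᶜ = D := by
    ext x; have := hmem x; have := @hdisj x; simp only [mem_compl, mem_union]; tauto
  have hSD : (S ∪ D)ᶜ = C := by
    ext x; have := hmem x; have := @hdisj x; simp only [mem_compl, mem_union]; tauto
  have hconnC : (G.induce (S ∪ C : Finset V)).Connected := by
    rw [coe_union]
    refine hG.induce_union_of_forall_adj hS fun w hw y hy hwy => ?_
    exact ((hmem y).1 hy).resolve_right fun hyD => hnadj w hw y hyD hwy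
  have hconnD : (G.induce (S ∪ D : Finset V)).Connected := by
    rw [coe_union]
    refine hG.induce_union_of_forall_adj hS fun w hw y hy hwy => ?_
    exact ((hmem y).1 hy).resolve_left fun hyC => hnadj y hyC w hw hwy.symm
  have hC' := ih _ (by rw [← hN, hSC]; have := hC.card_pos; omega) (S ∪ C) hconnC rfl
  have hD' := ih _ (by rw [← hN, hSD]; have := hD.card_pos; omega) (S ∪ D) hconnD rfl
  have hcap := cutCapacity_add_cutCapacity_of_not_adj (a := a) (b := b) hadj
    (X := S ∪ C) (Y := S ∪ D) fun x hx y hy => by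
      simp only [mem_sdiff, mem_union] at hx hy
      exact hnadj x (by tauto) y (by tauto)
  have hunion : S ∪ C ∪ (S ∪ D) = univ := by
    ext x; have := hmem x; simp only [mem_union, mem_univ, iff_true]; tauto
  have hinter : (S ∪ C) ∩ (S ∪ D) = S := by
    ext x; have := hmem x; have := @hdisj x; simp only [mem_inter, mem_union]; tauto
  have hsum := sum_union_inter (s₁ := S ∪ C) (s₂ := S ∪ D) (f := t)
  rw [hunion, hinter, ht] at hsum
  rw [hunion, hinter, cutCapacity_univ] at hcap
  linarith

theorem le_cutCapacity_of_connected_cuts [Fintype V] (hG : G.Connected)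
    (hadj : ∀ e, G.Adj (u e) (v e)) (ht : ∑ i, t i = 0)
    (hcut : ∀ S : Finset V, (G.induce (S : Set V)).Connected →
      (G.induce (Sᶜ : Finset V)).Connected → ∑ i ∈ S, t i ≤ cutCapacity u v a b S)
    (S : Finset V) : ∑ i ∈ S, t i ≤ cutCapacity u v a b S := by
  induction hN : #S using Nat.strong_induction_on generalizing S with
  | _ N ih =>
  rcases S.eq_empty_or_nonempty with rfl | hS
  · simp
  by_cases hS_conn : (G.induce (S : Set V)).Connected
  · exact le_cutCapacity_of_connected_induce hG hadj ht hcut S hS_conn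
  obtain ⟨C, D, hC, hD, hCD, hCDS, hnadj⟩ :=
    G.exists_partition_of_not_connected_induce hS hS_conn
  have hcard := card_union_of_disjoint hCD
  rw [hCDS] at hcard
  have hC' := ih _ (by have := hD.card_pos; omega) C rfl
  have hD' := ih _ (by have := hC.card_pos; omega) D rfl
  have hcap := cutCapacity_add_cutCapacity_of_not_adj (a := a) (b := b) hadj
    (X := C) (Y := D) fun x hx y hy => hnadj x (mem_sdiff.1 hx).1 y (mem_sdiff.1 hy).1
  have hsum := sum_union_inter (s₁ := C) (s₂ := D) (f := t)
  rw [hCDS, disjoint_iff_inter_eq_empty.1 hCD] at hsum hcap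
  rw [cutCapacity_empty] at hcap
  rw [sum_empty] at hsum
  linarith

theorem exists_flow_iff_of_connected [Fintype V] (hG : G.Connected)
    (hadj : ∀ e, G.Adj (u e) (v e)) (hab : ∀ e, a e ≤ b e) :
    (∃ x : E → ℤ, (∀ e, a e ≤ x e ∧ x e ≤ b e) ∧ ∀ k, netOutflow u v x k = t k) ↔
      ∑ i, t i = 0 ∧ ∀ S : Finset V, (G.induce (S : Set V)).Connected →
        (G.induce (Sᶜ : Finset V)).Connected → ∑ i ∈ S, t i ≤ cutCapacity u v a b S := by
  rw [exists_flow_iff_le_cutCapacity hab]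
  exact and_congr_right fun ht =>
    ⟨fun h S _ _ => h S, fun h => le_cutCapacity_of_connected_cuts hG hadj ht h⟩

end Reduction

section Bipartite

variable {V : Type*} {G : SimpleGraph V} {P : V → Prop}

lemma exists_bipartite_orientation (hbip : ∀ i j, G.Adj i j → (P i ↔ ¬P j)) :
    ∃ u v : G.edgeSet → V,
      ∀ e : G.edgeSet, (e : Sym2 V) = s(u e, v e) ∧ P (u e) ∧ ¬P (v e) := by
  have : ∀ e : G.edgeSet, ∃ x y, (e : Sym2 V) = s(x, y) ∧ P x ∧ ¬P y := by
    rintro ⟨e, he⟩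
    induction e using Sym2.ind with
    | h i j =>
      have hij := hbip i j he
      by_cases hi : P i
      · exact ⟨i, j, rfl, hi, hij.1 hi⟩
      · exact ⟨j, i, Sym2.eq_swap, not_not.1 (mt hij.2 hi), hi⟩
  choose u v h using this
  exact ⟨u, v, h⟩

lemma Sym2.exists_mem_and_iff_of_eq {z : Sym2 V} {x y : V} (hz : z = s(x, y)) (hx : P x)
    (hy : ¬P y) (Q : V → Prop) : (∃ i ∈ z, P i ∧ Q i) ↔ Q x := by
  subst hz
  simp only [Sym2.mem_iff, exists_eq_or_imp, exists_eq_left, hx, hy, true_and, false_and,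
    or_false]

lemma Sym2.exists_mem_not_and_iff_of_eq {z : Sym2 V} {x y : V} (hz : z = s(x, y)) (hx : P x)
    (hy : ¬P y) (Q : V → Prop) : (∃ i ∈ z, ¬P i ∧ Q i) ↔ Q y := by
  subst hz
  simp only [Sym2.mem_iff, exists_eq_or_imp, exists_eq_left, hx, hy, not_true_eq_false,
    not_false_eq_true, true_and, false_and, false_or]

lemma forall_finset_iff_forall_union [DecidableEq V] [DecidablePred P] {Q : Finset V → Prop} :
    (∀ S, Q S) ↔ ∀ I J : Finset V, (∀ i ∈ I, P i) → (∀ j ∈ J, ¬P j) → Q (I ∪ J) :=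
  ⟨fun h _ _ _ _ => h _, fun h S => filter_union_filter_not_eq P S ▸
    h _ _ (fun _ hi => (mem_filter.1 hi).2) (fun _ hj => (mem_filter.1 hj).2)⟩

variable [DecidableEq V] {I J : Finset V}

lemma sum_union_ite_neg [DecidablePred P] (hI : ∀ i ∈ I, P i) (hJ : ∀ j ∈ J, ¬P j)
    (s : V → ℤ) :
    ∑ i ∈ I ∪ J, (if P i then s i else -s i) = ∑ i ∈ I, s i - ∑ j ∈ J, s j := by
  rw [sum_union (disjoint_left.2 fun i hI' hJ' => hJ i hJ' (hI i hI')),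
    sum_congr rfl fun i hi => if_pos (hI i hi), sum_congr rfl fun j hj => if_neg (hJ j hj),
    sum_neg_distrib, sub_eq_add_neg]

lemma sdiff_union_sdiff_eq_coe_compl_union [Fintype V] (hI : ∀ i ∈ I, P i)
    (hJ : ∀ j ∈ J, ¬P j) :
    ({k | P k} \ (I : Set V)) ∪ ({k | ¬P k} \ (J : Set V)) = ((I ∪ J)ᶜ : Finset V) := by
  ext k
  have := hI k
  have := hJ k
  simp only [Set.mem_union, Set.mem_sdiff, Set.mem_ofPred_eq, mem_coe, coe_compl, coe_union,
    Set.mem_compl_iff]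
  tauto

lemma cutCapacity_union_eq {u v : G.edgeSet → V} [Fintype G.edgeSet]
    (horient : ∀ e : G.edgeSet, (e : Sym2 V) = s(u e, v e) ∧ P (u e) ∧ ¬P (v e))
    (hI : ∀ i ∈ I, P i) (hJ : ∀ j ∈ J, ¬P j) (a b : G.edgeSet → ℤ) :
    cutCapacity u v a b (I ∪ J) =
      (∑ e : G.edgeSet, if (∃ i ∈ (e : Sym2 V), P i ∧ i ∈ I) ∧
        (∃ j ∈ (e : Sym2 V), ¬P j ∧ j ∉ J) then b e else 0) -
      ∑ e : G.edgeSet, if (∃ i ∈ (e : Sym2 V), P i ∧ i ∉ I) ∧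
        (∃ j ∈ (e : Sym2 V), ¬P j ∧ j ∈ J) then a e else 0 := by
  rw [cutCapacity, ← sum_sub_distrib]
  refine sum_congr rfl fun e _ => ?_
  obtain ⟨he, hu, hv⟩ := horient e
  have huI : u e ∈ I ∪ J ↔ u e ∈ I := by
    simpa only [mem_union, or_iff_left_iff_imp] using fun h => absurd hu (hJ _ h)
  have hvJ : v e ∈ I ∪ J ↔ v e ∈ J := by
    simpa only [mem_union, or_iff_right_iff_imp] using fun h => absurd (hI _ h) hv
  simp only [Sym2.exists_mem_and_iff_of_eq he hu hv, Sym2.exists_mem_not_and_iff_of_eq he hu hv,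
    huI, hvJ]

end Bipartite

section EdgeVec

variable {n : ℕ} {G : SimpleGraph (Fin n)} [Fintype G.edgeSet] {P : Fin n → Prop}
  [DecidablePred P] {u v : G.edgeSet → Fin n}

lemma sum_smul_edgeVecZ_apply
    (horient : ∀ e : G.edgeSet, (e : Sym2 (Fin n)) = s(u e, v e) ∧ P (u e) ∧ ¬P (v e))
    (x : G.edgeSet → ℤ) (k : Fin n) :
    (∑ e : G.edgeSet, x e • edgeVecZ (e : Sym2 (Fin n))) k =
      if P k then netOutflow u v x k else -netOutflow u v x k := by
  have hmem (e : G.edgeSet) : k ∈ (e : Sym2 (Fin n)) ↔ u e = k ∨ v e = k := by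
    rw [(horient e).1, Sym2.mem_iff, eq_comm, @eq_comm _ k]
  simp only [Finset.sum_apply, Pi.smul_apply, smul_eq_mul, edgeVecZ, mul_ite, mul_one, mul_zero,
    ← sum_filter, hmem, netOutflow]
  by_cases hk : P k
  · have hv e : v e ≠ k := fun h => (horient e).2.2 (h ▸ hk)
    simp [hk, hv]
  · have hu e : u e ≠ k := fun h => hk (h ▸ (horient e).2.1)
    simp [hk, hu]

lemma eq_sum_smul_edgeVecZ_iff
    (horient : ∀ e : G.edgeSet, (e : Sym2 (Fin n)) = s(u e, v e) ∧ P (u e) ∧ ¬P (v e))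
    (s : Fin n → ℤ) (x : G.edgeSet → ℤ) :
    s = ∑ e : G.edgeSet, x e • edgeVecZ (e : Sym2 (Fin n)) ↔
      ∀ k, netOutflow u v x k = if P k then s k else -s k := by
  refine funext_iff.trans (forall_congr' fun k => ?_)
  rw [sum_smul_edgeVecZ_apply horient]
  split_ifs <;> omega

end EdgeVec

theorem bipartite_gale_ryser_general {n : ℕ} (r : ℕ)
    (G : SimpleGraph (Fin n)) (hconn : G.Connected)
    (hbip : ∀ i j : Fin n, G.Adj i j → ((i : ℕ) < r ↔ ¬ (j : ℕ) < r))
    (s : Fin n → ℤ) (a b : G.edgeSet → ℤ) (hab : ∀ e, a e ≤ b e) :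
    (∃ x : G.edgeSet → ℤ, (∀ e, a e ≤ x e ∧ x e ≤ b e) ∧
        s = ∑ e : G.edgeSet, x e • edgeVecZ (e : Sym2 (Fin n))) ↔
      ((∑ i ∈ Finset.univ.filter (fun i : Fin n => (i : ℕ) < r), s i =
          ∑ i ∈ Finset.univ.filter (fun i : Fin n => ¬ (i : ℕ) < r), s i) ∧
        ∀ I J : Finset (Fin n), (∀ i ∈ I, (i : ℕ) < r) → (∀ j ∈ J, ¬ (j : ℕ) < r) →
          (G.induce ((I : Set (Fin n)) ∪ (J : Set (Fin n)))).Connected →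
          (G.induce (({k : Fin n | (k : ℕ) < r} \ (I : Set (Fin n))) ∪
            ({k : Fin n | ¬ (k : ℕ) < r} \ (J : Set (Fin n))))).Connected →
          ∑ i ∈ I, s i - ∑ j ∈ J, s j ≤
            (∑ e : G.edgeSet,
              if (∃ i ∈ (e : Sym2 (Fin n)), (i : ℕ) < r ∧ i ∈ I) ∧
                 (∃ j ∈ (e : Sym2 (Fin n)), ¬ (j : ℕ) < r ∧ j ∉ J) then b e else 0) -
            (∑ e : G.edgeSet,
              if (∃ i ∈ (e : Sym2 (Fin n)), (i : ℕ) < r ∧ i ∉ I) ∧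
                 (∃ j ∈ (e : Sym2 (Fin n)), ¬ (j : ℕ) < r ∧ j ∈ J) then a e else 0)) := by
  obtain ⟨u, v, horient⟩ := exists_bipartite_orientation hbip
  set P : Fin n → Prop := fun k => (k : ℕ) < r
  have hadj e : G.Adj (u e) (v e) := G.mem_edgeSet.1 ((horient e).1 ▸ e.2)
  simp only [eq_sum_smul_edgeVecZ_iff (P := P) horient]
  rw [exists_flow_iff_of_connected hconn hadj hab,
    forall_finset_iff_forall_union (P := P)]
  refine and_congr ?_ (forall₄_congr fun I J hI hJ => ?_)
  · rw [sum_ite, sum_neg_distrib, ← sub_eq_add_neg, sub_eq_zero]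
  · rw [← coe_union, sdiff_union_sdiff_eq_coe_compl_union hI hJ, sum_union_ite_neg hI hJ,
      cutCapacity_union_eq (P := P) horient hI hJ]
    -- the two sides differ only in the `Decidable` instances of the conditions of the `if`s
    congr!

/-- **Theorem 4.3** (generalized Gale–Ryser): for a connected bipartite graph `G` with
bipartition `({i | i < r}, {i | i ≥ r})`, integers `s_i` and `a_e ≤ b_e`, there exist
integers `a_e ≤ x_e ≤ b_e` with `∑ s_i f_i = ∑ x_e v(e)` iff conditions (1) and (2)
hold. -/
theorem bipartite_gale_ryser {n : ℕ} (r : ℕ) (hr : r ≤ n)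
    (G : SimpleGraph (Fin n)) (hconn : G.Connected)
    (hbip : ∀ i j : Fin n, G.Adj i j → ((i : ℕ) < r ↔ ¬ (j : ℕ) < r))
    (s : Fin n → ℤ) (a b : G.edgeSet → ℤ) (hab : ∀ e, a e ≤ b e) :
    (∃ x : G.edgeSet → ℤ, (∀ e, a e ≤ x e ∧ x e ≤ b e) ∧
        s = ∑ e : G.edgeSet, x e • edgeVecZ (e : Sym2 (Fin n))) ↔
      ((∑ i ∈ Finset.univ.filter (fun i : Fin n => (i : ℕ) < r), s i =
          ∑ i ∈ Finset.univ.filter (fun i : Fin n => ¬ (i : ℕ) < r), s i) ∧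
        ∀ I J : Finset (Fin n), (∀ i ∈ I, (i : ℕ) < r) → (∀ j ∈ J, ¬ (j : ℕ) < r) →
          (G.induce ((I : Set (Fin n)) ∪ (J : Set (Fin n)))).Connected →
          (G.induce (({k : Fin n | (k : ℕ) < r} \ (I : Set (Fin n))) ∪
            ({k : Fin n | ¬ (k : ℕ) < r} \ (J : Set (Fin n))))).Connected →
          ∑ i ∈ I, s i - ∑ j ∈ J, s j ≤
            (∑ e : G.edgeSet,
              if (∃ i ∈ (e : Sym2 (Fin n)), (i : ℕ) < r ∧ i ∈ I) ∧
                 (∃ j ∈ (e : Sym2 (Fin n)), ¬ (j : ℕ) < r ∧ j ∉ J) then b e else 0) -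
            (∑ e : G.edgeSet,
              if (∃ i ∈ (e : Sym2 (Fin n)), (i : ℕ) < r ∧ i ∉ I) ∧
                 (∃ j ∈ (e : Sym2 (Fin n)), ¬ (j : ℕ) < r ∧ j ∈ J) then a e else 0)) :=
  bipartite_gale_ryser_general r G hconn hbip s a b hab
end
end
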